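/- arXiv:2602.16644 — 4 statements merged into one kernel-verified Lean document; each statement's English description precedes it below -/
import Mathlib

section
/- Let α > 0. (i) If f : X×Y → ℝ satisfies the rectangular Hölder condition |f(x,y) − f(x',y) − f(x,y') + f(x',y')| ≤ C ρ_X(x,x')^α ρ_Y(y,y')^α for all x, x' ∈ X and y, y' ∈ Y, then |⟨f, ψ^l_k ⊗ ψ^s_r⟩| ≤ C·2^{−(l+s)(α+1/2)} for every tensor Haar function ψ^l_k ⊗ ψ^s_r. (ii) Conversely, if |⟨f, ψ^l_k ⊗ ψ^s_r⟩| ≤ C·2^{−(l+s)(α+1/2)} for every tensor Haar function, then f satisfies the rectangular Hölder condition of order α with a constant C' depending only on C and α. -/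
open scoped Classical
open Finset

/-- A dyadic balanced partition tree of depth `L` on a finite set `X` with `|X| = 2^L`.
Node indices `k` are 0-based: level `l` has the nodes `k = 0, …, 2^l − 1`, and the two
children of `node l k` are `node (l+1) (2k)` and `node (l+1) (2k+1)`. -/
structure DyadicTree (X : Type) [Fintype X] (L : ℕ) where
  node : ℕ → ℕ → Finset X
  node_zero : node 0 0 = Finset.univ
  disj : ∀ l ≤ L, ∀ k < 2 ^ l, ∀ k' < 2 ^ l, k ≠ k' → Disjoint (node l k) (node l k')
  cover : ∀ l ≤ L, ∀ x : X, ∃ k < 2 ^ l, x ∈ node l k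
  children : ∀ l < L, ∀ k < 2 ^ l,
    node l k = node (l + 1) (2 * k) ∪ node (l + 1) (2 * k + 1)
  card_node : ∀ l ≤ L, ∀ k < 2 ^ l, (node l k).card = 2 ^ (L - l)

namespace DyadicTree

variable {X : Type} [Fintype X] {L : ℕ}

/-- `x` and `x'` lie in a common level-`l` node. -/
def sameNode (T : DyadicTree X L) (l : ℕ) (x x' : X) : Prop :=
  ∃ k < 2 ^ l, x ∈ T.node l k ∧ x' ∈ T.node l k

/-- The level-`l` node containing `x`, as a `Finset`. -/
noncomputable def cell (T : DyadicTree X L) (l : ℕ) (x : X) : Finset X :=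
  Finset.univ.filter fun x' => T.sameNode l x x'

/-- The averaging (scaling) operator `P^l f(x)`: the average of `f` over the level-`l`
node containing `x`. -/
noncomputable def avg (T : DyadicTree X L) (l : ℕ) (f : X → ℝ) (x : X) : ℝ :=
  (∑ y ∈ T.cell l x, f y) / (T.cell l x).card

/-- The difference (wavelet) operator `Q^l f = P^{l+1} f − P^l f`. -/
noncomputable def Qop (T : DyadicTree X L) (l : ℕ) (f : X → ℝ) (x : X) : ℝ :=
  T.avg (l + 1) f x - T.avg l f x

/-- The tree distance `ρ(x,x')`: `0` if `x = x'`, else `2^{−l*}` where `l*` is the largest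
level `l ≤ L` at which `x` and `x'` lie in a common node. -/
noncomputable def rho (T : DyadicTree X L) (x x' : X) : ℝ :=
  if x = x' then 0
  else (2 : ℝ) ^ (-((Nat.findGreatest (fun l => T.sameNode l x x') L : ℕ) : ℝ))

/-- `f ∈ Λ_β(X)` with constant `C`. -/
def Holder (T : DyadicTree X L) (β C : ℝ) (f : X → ℝ) : Prop :=
  ∀ x x' : X, |f x - f x'| ≤ C * T.rho x x' ^ β

/-- The Haar function `ψ^l_k = 2^{l/2}(χ_{child₁} − χ_{child₂})` of the node `X^l_k`. -/
noncomputable def haar (T : DyadicTree X L) (l k : ℕ) : X → ℝ := fun x =>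
  (2 : ℝ) ^ ((l : ℝ) / 2) *
    ((if x ∈ T.node (l + 1) (2 * k) then (1 : ℝ) else 0) -
      (if x ∈ T.node (l + 1) (2 * k + 1) then (1 : ℝ) else 0))

/-- The normalized inner product `⟨f,g⟩ = (1/|X|) Σ_x f(x) g(x)`. -/
noncomputable def ip (_T : DyadicTree X L) (f g : X → ℝ) : ℝ :=
  (∑ x, f x * g x) / (Fintype.card X : ℝ)

/-- The Hölder norm `‖f‖_{Λ_β(X)} = max_{l<L, k<2^l} |⟨f,ψ^l_k⟩| / 2^{−l(β+1/2)}`. -/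
noncomputable def holderNorm (T : DyadicTree X L) (β : ℝ) (f : X → ℝ) : ℝ :=
  sSup {r : ℝ | ∃ l < L, ∃ k < 2 ^ l,
    r = |T.ip f (T.haar l k)| / (2 : ℝ) ^ (-(l : ℝ) * (β + 1 / 2))}

end DyadicTree

/-- The hierarchical paraproduct approximation `Ã_L(f) = Σ_{l<L} A'(P^l f)·Q^l f`. -/
noncomputable def Atilde1 {X : Type} [Fintype X] {L : ℕ} (T : DyadicTree X L)
    (A : ℝ → ℝ) (f : X → ℝ) : X → ℝ := fun x =>
  ∑ l ∈ Finset.range L, deriv A (T.avg l f x) * T.Qop l f x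

/-- The hierarchical paraproduct residual `Δ_L(A,f) = A∘f − Ã_L(f)`. -/
noncomputable def residual1 {X : Type} [Fintype X] {L : ℕ} (T : DyadicTree X L)
    (A : ℝ → ℝ) (f : X → ℝ) : X → ℝ := fun x =>
  A (f x) - Atilde1 T A f x

section Tensor

variable {X Y : Type} [Fintype X] [Fintype Y] {L S : ℕ}

/-- The tensor averaging operator `P^lP^s f(x,y)`: the average of `f` over `N × M`
where `N` is the level-`l` node containing `x` and `M` the level-`s` node containing `y`. -/
noncomputable def PP (TX : DyadicTree X L) (TY : DyadicTree Y S) (l s : ℕ)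
    (f : X × Y → ℝ) (p : X × Y) : ℝ :=
  (∑ q ∈ (TX.cell l p.1) ×ˢ (TY.cell s p.2), f q) /
    ((TX.cell l p.1).card * (TY.cell s p.2).card)

/-- `Q^lP^s f = P^{l+1}P^s f − P^lP^s f`. -/
noncomputable def QP (TX : DyadicTree X L) (TY : DyadicTree Y S) (l s : ℕ)
    (f : X × Y → ℝ) (p : X × Y) : ℝ :=
  PP TX TY (l + 1) s f p - PP TX TY l s f p

/-- `P^lQ^s f = P^lP^{s+1} f − P^lP^s f`. -/
noncomputable def PQ (TX : DyadicTree X L) (TY : DyadicTree Y S) (l s : ℕ)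
    (f : X × Y → ℝ) (p : X × Y) : ℝ :=
  PP TX TY l (s + 1) f p - PP TX TY l s f p

/-- `Q^lQ^s f = P^{l+1}P^{s+1} f − P^{l+1}P^s f − P^lP^{s+1} f + P^lP^s f`. -/
noncomputable def QQ (TX : DyadicTree X L) (TY : DyadicTree Y S) (l s : ℕ)
    (f : X × Y → ℝ) (p : X × Y) : ℝ :=
  PP TX TY (l + 1) (s + 1) f p - PP TX TY (l + 1) s f p - PP TX TY l (s + 1) f p
    + PP TX TY l s f p

/-- `f ∈ Λ_β(X×Y)` with constant `C`: the rectangular (mixed-difference) condition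
together with the two one-variable Hölder conditions. -/
def HolderRect (TX : DyadicTree X L) (TY : DyadicTree Y S) (β C : ℝ)
    (f : X × Y → ℝ) : Prop :=
  (∀ x x' : X, ∀ y y' : Y,
      |f (x, y) - f (x', y) - f (x, y') + f (x', y')| ≤
        C * TX.rho x x' ^ β * TY.rho y y' ^ β) ∧
  (∀ x x' : X, ∀ y : Y, |f (x, y) - f (x', y)| ≤ C * TX.rho x x' ^ β) ∧
  (∀ x : X, ∀ y y' : Y, |f (x, y) - f (x, y')| ≤ C * TY.rho y y' ^ β)

/-- The tensor Haar function `(ψ^l_k ⊗ ψ^s_r)(x,y) = ψ^l_k(x) ψ^s_r(y)`. -/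
noncomputable def tensorHaar (TX : DyadicTree X L) (TY : DyadicTree Y S)
    (l k s r : ℕ) : X × Y → ℝ := fun p => TX.haar l k p.1 * TY.haar s r p.2

/-- `⟨f,g⟩ = (1/(|X||Y|)) Σ_{(x,y)} f(x,y) g(x,y)`. -/
noncomputable def ip2 (f g : X × Y → ℝ) : ℝ :=
  (∑ p : X × Y, f p * g p) / ((Fintype.card X : ℝ) * (Fintype.card Y : ℝ))

/-- The tensor Hölder norm
`‖f‖_{Λ_β(X×Y)} = max_{l,s,k,r} |⟨f, ψ^l_k ⊗ ψ^s_r⟩| / 2^{−(l+s)(β+1/2)}`. -/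
noncomputable def holderNorm2 (TX : DyadicTree X L) (TY : DyadicTree Y S)
    (β : ℝ) (f : X × Y → ℝ) : ℝ :=
  sSup {u : ℝ | ∃ l < L, ∃ s < S, ∃ k < 2 ^ l, ∃ r < 2 ^ s,
    u = |ip2 f (tensorHaar TX TY l k s r)| /
      (2 : ℝ) ^ (-((l : ℝ) + (s : ℝ)) * (β + 1 / 2))}

/-- The hierarchical tensor paraproduct approximation
`Ã_{L,S}(f) = Σ_{l<L} Σ_{s<S} [A'(P^lP^s f)·Q^lQ^s f + A''(P^lP^s f)·(Q^lP^s f)·(P^lQ^s f)]`. -/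
noncomputable def Atilde2 (TX : DyadicTree X L) (TY : DyadicTree Y S)
    (A : ℝ → ℝ) (f : X × Y → ℝ) : X × Y → ℝ := fun p =>
  ∑ l ∈ Finset.range L, ∑ s ∈ Finset.range S,
    (deriv A (PP TX TY l s f p) * QQ TX TY l s f p +
      deriv (deriv A) (PP TX TY l s f p) * QP TX TY l s f p * PQ TX TY l s f p)

/-- The hierarchical tensor paraproduct residual `Δ_{L,S}(A,f) = A∘f − Ã_{L,S}(f)`. -/
noncomputable def residual2 (TX : DyadicTree X L) (TY : DyadicTree Y S)
    (A : ℝ → ℝ) (f : X × Y → ℝ) : X × Y → ℝ := fun p =>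
  A (f p) - Atilde2 TX TY A f p

end Tensor

namespace DyadicTree

variable {X : Type} [Fintype X] {L : ℕ}

lemma node_unique (T : DyadicTree X L) {l k k' : ℕ} {x : X} (hl : l ≤ L)
    (hk : k < 2 ^ l) (hk' : k' < 2 ^ l) (h : x ∈ T.node l k) (h' : x ∈ T.node l k') :
    k = k' := by
  by_contra hne
  exact (Finset.disjoint_left.mp (T.disj l hl k hk k' hk' hne) h) h'

lemma sameNode_iff_mem (T : DyadicTree X L) {l k : ℕ} {x x' : X} (hl : l ≤ L)
    (hk : k < 2 ^ l) (hx : x ∈ T.node l k) :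
    T.sameNode l x x' ↔ x' ∈ T.node l k := by
  constructor
  · rintro ⟨k', hk', hx1, hx2⟩
    rwa [← T.node_unique hl hk hk' hx hx1] at hx2
  · exact fun h => ⟨k, hk, hx, h⟩

lemma cell_eq (T : DyadicTree X L) {l k : ℕ} {x : X} (hl : l ≤ L)
    (hk : k < 2 ^ l) (hx : x ∈ T.node l k) : T.cell l x = T.node l k := by
  ext x'
  simp [cell, T.sameNode_iff_mem hl hk hx]

lemma sameNode_self (T : DyadicTree X L) {l : ℕ} (hl : l ≤ L) (x : X) :
    T.sameNode l x x := by
  obtain ⟨k, hk, hx⟩ := T.cover l hl x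
  exact ⟨k, hk, hx, hx⟩

lemma sameNode_succ_imp (T : DyadicTree X L) {l : ℕ} {x x' : X} (hl : l < L)
    (h : T.sameNode (l + 1) x x') : T.sameNode l x x' := by
  obtain ⟨k, hk, hx, hx'⟩ := h
  have hk2 : k / 2 < 2 ^ l := by
    rw [pow_succ] at hk; omega
  have hsub : T.node (l + 1) k ⊆ T.node l (k / 2) := by
    have hch := T.children l hl (k / 2) hk2
    have : k = 2 * (k / 2) ∨ k = 2 * (k / 2) + 1 := by omega
    rcases this with h2 | h2
    · rw [hch]; conv_lhs => rw [h2]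
      exact Finset.subset_union_left
    · rw [hch]; conv_lhs => rw [h2]
      exact Finset.subset_union_right
  exact ⟨k / 2, hk2, hsub hx, hsub hx'⟩

lemma sameNode_mono (T : DyadicTree X L) {l m : ℕ} {x x' : X} (hm : m ≤ L)
    (hlm : l ≤ m) (h : T.sameNode m x x') : T.sameNode l x x' := by
  induction m with
  | zero =>
    have : l = 0 := by omega
    subst this; exact h
  | succ n ih =>
    rcases Nat.lt_or_ge l (n + 1) with h1 | h2
    · exact ih (by omega) (by omega) (T.sameNode_succ_imp (by omega) h)
    · have : l = n + 1 := by omega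
      subst this; exact h

lemma rho_nonneg (T : DyadicTree X L) (x x' : X) : 0 ≤ T.rho x x' := by
  unfold rho
  split
  · exact le_rfl
  · positivity

end DyadicTree
namespace DyadicTree

variable {X : Type} [Fintype X] {L : ℕ}

lemma rho_le_of_sameNode (T : DyadicTree X L) {l : ℕ} {x x' : X} (hl : l ≤ L)
    (h : T.sameNode l x x') : T.rho x x' ≤ (2 : ℝ) ^ (-(l : ℝ)) := by
  unfold rho
  split
  · positivity
  · apply Real.rpow_le_rpow_of_exponent_le one_le_two
    have hle : l ≤ Nat.findGreatest (fun l => T.sameNode l x x') L :=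
      Nat.le_findGreatest hl h
    have : (l : ℝ) ≤ (Nat.findGreatest (fun l => T.sameNode l x x') L : ℝ) := by
      exact_mod_cast hle
    linarith

lemma card_univ_eq (T : DyadicTree X L) : Fintype.card X = 2 ^ L := by
  have h := T.card_node 0 (Nat.zero_le L) 0 (by norm_num)
  rw [T.node_zero] at h
  simpa using h

lemma card_cell (T : DyadicTree X L) {l : ℕ} (hl : l ≤ L) (x : X) :
    (T.cell l x).card = 2 ^ (L - l) := by
  obtain ⟨k, hk, hx⟩ := T.cover l hl x
  rw [T.cell_eq hl hk hx]
  exact T.card_node l hl k hk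

lemma cell_top (T : DyadicTree X L) (x : X) : T.cell L x = {x} := by
  have hcard : (T.cell L x).card = 1 := by simpa using T.card_cell le_rfl x
  have hx : x ∈ T.cell L x := by
    simp only [cell, Finset.mem_filter, Finset.mem_univ, true_and]
    exact T.sameNode_self le_rfl x
  obtain ⟨a, ha⟩ := Finset.card_eq_one.mp hcard
  rw [ha] at hx ⊢
  simp only [Finset.mem_singleton] at hx
  rw [hx]

lemma exists_child (T : DyadicTree X L) {l : ℕ} (hl : l < L) (x : X) :
    ∃ k < 2 ^ l, ∃ b < 2, x ∈ T.node l k ∧ x ∈ T.node (l + 1) (2 * k + b) ∧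
      T.cell l x = T.node l k ∧ T.cell (l + 1) x = T.node (l + 1) (2 * k + b) := by
  obtain ⟨k, hk, hx⟩ := T.cover l hl.le x
  have hch := T.children l hl k hk
  have hb0 : 2 * k < 2 ^ (l + 1) := by rw [pow_succ]; omega
  have hb1 : 2 * k + 1 < 2 ^ (l + 1) := by rw [pow_succ]; omega
  have hx' : x ∈ T.node (l + 1) (2 * k) ∪ T.node (l + 1) (2 * k + 1) := hch ▸ hx
  rcases Finset.mem_union.mp hx' with h | h
  · exact ⟨k, hk, 0, by norm_num, hx, by simpa using h, T.cell_eq hl.le hk hx,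
      by simpa using T.cell_eq hl (by simpa using hb0) (by simpa using h)⟩
  · exact ⟨k, hk, 1, by norm_num, hx, h, T.cell_eq hl.le hk hx,
      T.cell_eq hl hb1 h⟩

lemma cell_congr (T : DyadicTree X L) {l : ℕ} {x x' : X} (hl : l ≤ L)
    (h : T.sameNode l x x') : T.cell l x = T.cell l x' := by
  obtain ⟨k, hk, hx, hx'⟩ := h
  rw [T.cell_eq hl hk hx, T.cell_eq hl hk hx']

lemma rho_eq (T : DyadicTree X L) {x x' : X} (h : x ≠ x') :
    T.rho x x' = (2 : ℝ) ^
      (-((Nat.findGreatest (fun l => T.sameNode l x x') L : ℕ) : ℝ)) := by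
  unfold rho
  rw [if_neg h]

end DyadicTree
section TensorAux

variable {X Y : Type} [Fintype X] [Fintype Y] {L S : ℕ}

lemma double_ind (A : Finset X) (B : Finset Y) (f : X × Y → ℝ) :
    ∑ u : X, ∑ v : Y, f (u, v) * ((if u ∈ A then (1:ℝ) else 0) *
      (if v ∈ B then (1:ℝ) else 0)) = ∑ u ∈ A, ∑ v ∈ B, f (u, v) := by
  simp [mul_ite, mul_one, mul_zero, Finset.sum_ite_mem, Finset.univ_inter]

lemma sum_tensor_ind (A₀ A₁ : Finset X) (B₀ B₁ : Finset Y) (c d : ℝ) (f : X × Y → ℝ) :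
    ∑ p : X × Y, f p * ((c * ((if p.1 ∈ A₀ then (1:ℝ) else 0) -
        (if p.1 ∈ A₁ then (1:ℝ) else 0))) *
      (d * ((if p.2 ∈ B₀ then (1:ℝ) else 0) - (if p.2 ∈ B₁ then (1:ℝ) else 0)))) =
    c * d * (((∑ u ∈ A₀, ∑ v ∈ B₀, f (u, v)) - ∑ u ∈ A₀, ∑ v ∈ B₁, f (u, v)) -
      ((∑ u ∈ A₁, ∑ v ∈ B₀, f (u, v)) - ∑ u ∈ A₁, ∑ v ∈ B₁, f (u, v))) := by
  have h1 : ∀ p : X × Y, f p * ((c * ((if p.1 ∈ A₀ then (1:ℝ) else 0) -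
        (if p.1 ∈ A₁ then (1:ℝ) else 0))) *
      (d * ((if p.2 ∈ B₀ then (1:ℝ) else 0) - (if p.2 ∈ B₁ then (1:ℝ) else 0)))) =
      c * d * ((f p * ((if p.1 ∈ A₀ then (1:ℝ) else 0) * (if p.2 ∈ B₀ then (1:ℝ) else 0)) -
        f p * ((if p.1 ∈ A₀ then (1:ℝ) else 0) * (if p.2 ∈ B₁ then (1:ℝ) else 0))) -
       (f p * ((if p.1 ∈ A₁ then (1:ℝ) else 0) * (if p.2 ∈ B₀ then (1:ℝ) else 0)) -
        f p * ((if p.1 ∈ A₁ then (1:ℝ) else 0) * (if p.2 ∈ B₁ then (1:ℝ) else 0)))) := by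
    intro p; ring
  rw [Finset.sum_congr rfl fun p _ => h1 p, ← Finset.mul_sum]
  congr 1
  rw [Finset.sum_sub_distrib, Finset.sum_sub_distrib, Finset.sum_sub_distrib]
  congr 1 <;> congr 1 <;> (rw [Fintype.sum_prod_type]; exact double_ind _ _ f)


lemma ip2_tensor_eq (TX : DyadicTree X L) (TY : DyadicTree Y S) (f : X × Y → ℝ)
    (l k s r : ℕ) :
    ip2 f (tensorHaar TX TY l k s r) =
      (2:ℝ) ^ ((l:ℝ)/2) * (2:ℝ) ^ ((s:ℝ)/2) *
      (((∑ u ∈ TX.node (l+1) (2*k), ∑ v ∈ TY.node (s+1) (2*r), f (u, v)) -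
         ∑ u ∈ TX.node (l+1) (2*k), ∑ v ∈ TY.node (s+1) (2*r+1), f (u, v)) -
       ((∑ u ∈ TX.node (l+1) (2*k+1), ∑ v ∈ TY.node (s+1) (2*r), f (u, v)) -
         ∑ u ∈ TX.node (l+1) (2*k+1), ∑ v ∈ TY.node (s+1) (2*r+1), f (u, v))) /
      ((2:ℝ) ^ (L : ℕ) * (2:ℝ) ^ (S : ℕ)) := by
  unfold ip2 tensorHaar DyadicTree.haar
  rw [sum_tensor_ind]
  rw [TX.card_univ_eq, TY.card_univ_eq]
  push_cast
  ring

lemma PP_eq_node (TX : DyadicTree X L) (TY : DyadicTree Y S) {l s k r : ℕ} {x : X} {y : Y}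
    (hl : l ≤ L) (hs : s ≤ S) (hk : k < 2 ^ l) (hr : r < 2 ^ s)
    (hx : x ∈ TX.node l k) (hy : y ∈ TY.node s r) (f : X × Y → ℝ) :
    PP TX TY l s f (x, y) =
      (∑ u ∈ TX.node l k, ∑ v ∈ TY.node s r, f (u, v)) /
        ((2 ^ (L - l) : ℕ) * (2 ^ (S - s) : ℕ) : ℝ) := by
  unfold PP
  simp only
  rw [TX.cell_eq hl hk hx, TY.cell_eq hs hr hy, Finset.sum_product,
      TX.card_node l hl k hk, TY.card_node s hs r hr]

lemma PP_top (TX : DyadicTree X L) (TY : DyadicTree Y S) (f : X × Y → ℝ) (x : X) (y : Y) :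
    PP TX TY L S f (x, y) = f (x, y) := by
  unfold PP
  simp only
  rw [TX.cell_top, TY.cell_top]
  simp

end TensorAux
section QQbound

variable {X Y : Type} [Fintype X] [Fintype Y] {L S : ℕ}

lemma abs_QQ_le {α C : ℝ} (TX : DyadicTree X L) (TY : DyadicTree Y S) (f : X × Y → ℝ)
    {l s : ℕ} (hl : l < L) (hs : s < S)
    (h : ∀ k < 2 ^ l, ∀ r < 2 ^ s, |ip2 f (tensorHaar TX TY l k s r)| ≤
      C * (2 : ℝ) ^ (-((l : ℝ) + (s : ℝ)) * (α + 1 / 2)))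
    (p : X × Y) :
    |QQ TX TY l s f p| ≤ C * (2 : ℝ) ^ (-((l : ℝ) + (s : ℝ)) * α) := by
  obtain ⟨x, y⟩ := p
  obtain ⟨k, hk, b, hb, hxk, hxb, _, _⟩ := TX.exists_child hl x
  obtain ⟨r, hr, c, hc, hyr, hyc, _, _⟩ := TY.exists_child hs y
  have hkb : 2 * k + b < 2 ^ (l + 1) := by rw [pow_succ]; omega
  have hrc : 2 * r + c < 2 ^ (s + 1) := by rw [pow_succ]; omega
  set n := L - (l + 1) with hn'
  set m := S - (s + 1) with hm'
  have hn : L = n + 1 + l := by omega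
  have hm : S = m + 1 + s := by omega
  have hLl : L - l = n + 1 := by omega
  have hSs : S - s = m + 1 := by omega
  have hLl1 : L - (l + 1) = n := rfl
  have hSs1 : S - (s + 1) = m := rfl
  set A₀ := TX.node (l + 1) (2 * k) with hA0
  set A₁ := TX.node (l + 1) (2 * k + 1) with hA1
  set B₀ := TY.node (s + 1) (2 * r) with hB0
  set B₁ := TY.node (s + 1) (2 * r + 1) with hB1
  set T00 := ∑ u ∈ A₀, ∑ v ∈ B₀, f (u, v) with hT00
  set T01 := ∑ u ∈ A₀, ∑ v ∈ B₁, f (u, v) with hT01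
  set T10 := ∑ u ∈ A₁, ∑ v ∈ B₀, f (u, v) with hT10
  set T11 := ∑ u ∈ A₁, ∑ v ∈ B₁, f (u, v) with hT11
  set D := T00 - T01 - (T10 - T11) with hD
  -- splitting lemmas
  have hXsplit : ∀ g : X → ℝ, ∑ u ∈ TX.node l k, g u = ∑ u ∈ A₀, g u + ∑ u ∈ A₁, g u := by
    intro g
    rw [TX.children l hl k hk]
    exact Finset.sum_union (TX.disj (l + 1) hl (2 * k) (by rw [pow_succ]; omega)
      (2 * k + 1) (by rw [pow_succ]; omega) (by omega))
  have hYsplit : ∀ g : Y → ℝ, ∑ v ∈ TY.node s r, g v = ∑ v ∈ B₀, g v + ∑ v ∈ B₁, g v := by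
    intro g
    rw [TY.children s hs r hr]
    exact Finset.sum_union (TY.disj (s + 1) hs (2 * r) (by rw [pow_succ]; omega)
      (2 * r + 1) (by rw [pow_succ]; omega) (by omega))
  have hinner : ∀ A : Finset X, ∑ u ∈ A, ∑ v ∈ TY.node s r, f (u, v) =
      (∑ u ∈ A, ∑ v ∈ B₀, f (u, v)) + ∑ u ∈ A, ∑ v ∈ B₁, f (u, v) := by
    intro A
    rw [← Finset.sum_add_distrib]
    exact Finset.sum_congr rfl fun u _ => hYsplit _
  -- the four PP values
  set N := ((2 : ℝ) ^ n : ℝ) with hN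
  set M := ((2 : ℝ) ^ m : ℝ) with hM
  have hNpos : (0 : ℝ) < N := by positivity
  have hMpos : (0 : ℝ) < M := by positivity
  have e00 : PP TX TY l s f (x, y) = (T00 + T01 + (T10 + T11)) / (2 * N * (2 * M)) := by
    rw [PP_eq_node TX TY hl.le hs.le hk hr hxk hyr f, hXsplit, hinner A₀, hinner A₁, hLl, hSs,
      hT00, hT01, hT10, hT11]
    congr 1
    rw [hN, hM]
    push_cast [pow_succ]
    ring
  have e10 : PP TX TY (l + 1) s f (x, y) =
      ((∑ u ∈ TX.node (l+1) (2*k+b), ∑ v ∈ B₀, f (u, v)) +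
        ∑ u ∈ TX.node (l+1) (2*k+b), ∑ v ∈ B₁, f (u, v)) / (N * (2 * M)) := by
    rw [PP_eq_node TX TY hl hs.le hkb hr hxb hyr f, hinner, hLl1, hSs]
    congr 1
    rw [hN, hM]
    push_cast [pow_succ]
    ring
  have e01 : PP TX TY l (s + 1) f (x, y) =
      ((∑ u ∈ A₀, ∑ v ∈ TY.node (s+1) (2*r+c), f (u, v)) +
        ∑ u ∈ A₁, ∑ v ∈ TY.node (s+1) (2*r+c), f (u, v)) / (2 * N * M) := by
    rw [PP_eq_node TX TY hl.le hs hk hrc hxk hyc f, hXsplit, hLl, hSs1]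
    congr 1
    rw [hN, hM]
    push_cast [pow_succ]
    ring
  have e11 : PP TX TY (l + 1) (s + 1) f (x, y) =
      (∑ u ∈ TX.node (l+1) (2*k+b), ∑ v ∈ TY.node (s+1) (2*r+c), f (u, v)) / (N * M) := by
    rw [PP_eq_node TX TY hl hs hkb hrc hxb hyc f, hLl1, hSs1]
    congr 1
    rw [hN, hM]
    push_cast
    ring
  have hQQ : QQ TX TY l s f (x, y) = PP TX TY (l+1) (s+1) f (x, y)
      - PP TX TY (l+1) s f (x, y) - PP TX TY l (s+1) f (x, y) + PP TX TY l s f (x, y) := rfl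
  have h4NM : (0:ℝ) < 4 * N * M := by positivity
  have hQQD : |QQ TX TY l s f (x, y)| = |D| / (4 * N * M) := by
    interval_cases b <;> interval_cases c
    · try simp only [Nat.add_zero] at e10 e01 e11
      rw [← hA0] at e10 e11
      rw [← hB0] at e01 e11
      have hv : QQ TX TY l s f (x, y) = D / (4 * N * M) := by
        rw [hQQ, e00, e10, e01, e11, hD, hT00, hT01, hT10, hT11]
        field_simp
        ring
      rw [hv, abs_div, abs_of_pos h4NM]
    · try simp only [Nat.add_zero] at e10 e01 e11
      rw [← hA0] at e10 e11
      rw [← hB1] at e01 e11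
      have hv : QQ TX TY l s f (x, y) = -(D / (4 * N * M)) := by
        rw [hQQ, e00, e10, e01, e11, hD, hT00, hT01, hT10, hT11]
        field_simp
        ring
      rw [hv, abs_neg, abs_div, abs_of_pos h4NM]
    · try simp only [Nat.add_zero] at e10 e01 e11
      rw [← hA1] at e10 e11
      rw [← hB0] at e01 e11
      have hv : QQ TX TY l s f (x, y) = -(D / (4 * N * M)) := by
        rw [hQQ, e00, e10, e01, e11, hD, hT00, hT01, hT10, hT11]
        field_simp
        ring
      rw [hv, abs_neg, abs_div, abs_of_pos h4NM]
    · try simp only [Nat.add_zero] at e10 e01 e11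
      rw [← hA1] at e10 e11
      rw [← hB1] at e01 e11
      have hv : QQ TX TY l s f (x, y) = D / (4 * N * M) := by
        rw [hQQ, e00, e10, e01, e11, hD, hT00, hT01, hT10, hT11]
        field_simp
        ring
      rw [hv, abs_div, abs_of_pos h4NM]
  -- relate to the Haar coefficient
  have hip : |ip2 f (tensorHaar TX TY l k s r)| =
      (2:ℝ) ^ ((l:ℝ)/2) * (2:ℝ) ^ ((s:ℝ)/2) * |D| / ((2:ℝ) ^ L * (2:ℝ) ^ S) := by
    rw [ip2_tensor_eq TX TY f l k s r]
    rw [abs_div, abs_mul, abs_mul,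
      abs_of_pos (by positivity : (0:ℝ) < (2:ℝ) ^ ((l:ℝ)/2)),
      abs_of_pos (by positivity : (0:ℝ) < (2:ℝ) ^ ((s:ℝ)/2)),
      abs_of_pos (by positivity : (0:ℝ) < (2:ℝ) ^ (L:ℕ) * (2:ℝ) ^ (S:ℕ))]
  have hkey : ((2:ℝ) ^ L * (2:ℝ) ^ S : ℝ) =
      (2:ℝ) ^ (((l:ℝ) + (s:ℝ))/2) * ((2:ℝ) ^ ((l:ℝ)/2) * (2:ℝ) ^ ((s:ℝ)/2)) *
        (4 * N * M) := by
    have h4 : (4:ℝ) = (2:ℝ) ^ ((2:ℕ):ℝ) := by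
      rw [Real.rpow_natCast]; norm_num
    rw [hN, hM, h4, ← Real.rpow_natCast 2 n, ← Real.rpow_natCast 2 m,
      ← Real.rpow_natCast 2 L, ← Real.rpow_natCast 2 S]
    simp only [← Real.rpow_add two_pos]
    congr 1
    push_cast [hn, hm]
    ring
  have hrel : |QQ TX TY l s f (x, y)| =
      (2:ℝ) ^ (((l:ℝ) + (s:ℝ))/2) * |ip2 f (tensorHaar TX TY l k s r)| := by
    rw [hQQD, hip, hkey]
    have c1 : ((2:ℝ) ^ (((l:ℝ) + (s:ℝ))/2)) ≠ 0 := by positivity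
    have c2 : ((2:ℝ) ^ ((l:ℝ)/2)) ≠ 0 := by positivity
    have c3 : ((2:ℝ) ^ ((s:ℝ)/2)) ≠ 0 := by positivity
    field_simp
  rw [hrel]
  calc (2:ℝ) ^ (((l:ℝ) + (s:ℝ))/2) * |ip2 f (tensorHaar TX TY l k s r)|
      ≤ (2:ℝ) ^ (((l:ℝ) + (s:ℝ))/2) * (C * (2:ℝ) ^ (-((l:ℝ) + (s:ℝ)) * (α + 1/2))) := by
        exact mul_le_mul_of_nonneg_left (h k hk r hr) (by positivity)
    _ = C * (2:ℝ) ^ (-((l:ℝ) + (s:ℝ)) * α) := by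
        rw [mul_comm ((2:ℝ) ^ (((l:ℝ) + (s:ℝ))/2)), mul_assoc, ← Real.rpow_add two_pos]
        congr 2
        ring

end QQbound
namespace DyadicTree

variable {X : Type} [Fintype X] {L : ℕ}

lemma rho_pos (T : DyadicTree X L) {x x' : X} (h : x ≠ x') : 0 < T.rho x x' := by
  unfold rho
  rw [if_neg h]
  positivity

lemma child_subset_left (T : DyadicTree X L) {l k : ℕ} (hl : l < L) (hk : k < 2 ^ l) :
    T.node (l + 1) (2 * k) ⊆ T.node l k := by
  rw [T.children l hl k hk]; exact Finset.subset_union_left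

lemma child_subset_right (T : DyadicTree X L) {l k : ℕ} (hl : l < L) (hk : k < 2 ^ l) :
    T.node (l + 1) (2 * k + 1) ⊆ T.node l k := by
  rw [T.children l hl k hk]; exact Finset.subset_union_right

end DyadicTree

section CoeffBound

variable {X Y : Type} [Fintype X] [Fintype Y] {L S : ℕ}

lemma coeff_bound {α C : ℝ} (hα : 0 < α) (TX : DyadicTree X L) (TY : DyadicTree Y S)
    (f : X × Y → ℝ)
    (hf : ∀ x x' : X, ∀ y y' : Y,
      |f (x, y) - f (x', y) - f (x, y') + f (x', y')| ≤
        C * TX.rho x x' ^ α * TY.rho y y' ^ α)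
    {l s k r : ℕ} (hl : l < L) (hs : s < S) (hk : k < 2 ^ l) (hr : r < 2 ^ s) :
    |ip2 f (tensorHaar TX TY l k s r)| ≤ C * (2 : ℝ) ^ (-((l : ℝ) + (s : ℝ)) * (α + 1 / 2)) := by
  -- C is nonnegative
  have hcardX : 1 < Fintype.card X := by
    rw [TX.card_univ_eq]
    have : L ≠ 0 := by omega
    exact Nat.one_lt_two_pow_iff.mpr this
  have hcardY : 1 < Fintype.card Y := by
    rw [TY.card_univ_eq]
    have : S ≠ 0 := by omega
    exact Nat.one_lt_two_pow_iff.mpr this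
  obtain ⟨u₀, u₁, hu01⟩ := Fintype.exists_pair_of_one_lt_card hcardX
  obtain ⟨v₀, v₁, hv01⟩ := Fintype.exists_pair_of_one_lt_card hcardY
  have hC : 0 ≤ C := by
    have h1 := le_trans (abs_nonneg _) (hf u₀ u₁ v₀ v₁)
    have h2 : 0 < TX.rho u₀ u₁ ^ α := Real.rpow_pos_of_pos (TX.rho_pos hu01) α
    have h3 : 0 < TY.rho v₀ v₁ ^ α := Real.rpow_pos_of_pos (TY.rho_pos hv01) α
    by_contra hneg
    push_neg at hneg
    have : C * TX.rho u₀ u₁ ^ α * TY.rho v₀ v₁ ^ α < 0 :=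
      mul_neg_of_neg_of_pos (mul_neg_of_neg_of_pos hneg h2) h3
    linarith
  set n := L - (l + 1) with hn'
  set m := S - (s + 1) with hm'
  have hn : L = n + 1 + l := by omega
  have hm : S = m + 1 + s := by omega
  have hkb : 2 * k < 2 ^ (l + 1) := by rw [pow_succ]; omega
  have hkb' : 2 * k + 1 < 2 ^ (l + 1) := by rw [pow_succ]; omega
  have hrc : 2 * r < 2 ^ (s + 1) := by rw [pow_succ]; omega
  have hrc' : 2 * r + 1 < 2 ^ (s + 1) := by rw [pow_succ]; omega
  set A₀ := TX.node (l + 1) (2 * k) with hA0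
  set A₁ := TX.node (l + 1) (2 * k + 1) with hA1
  set B₀ := TY.node (s + 1) (2 * r) with hB0
  set B₁ := TY.node (s + 1) (2 * r + 1) with hB1
  set T00 := ∑ u ∈ A₀, ∑ v ∈ B₀, f (u, v) with hT00
  set T01 := ∑ u ∈ A₀, ∑ v ∈ B₁, f (u, v) with hT01
  set T10 := ∑ u ∈ A₁, ∑ v ∈ B₀, f (u, v) with hT10
  set T11 := ∑ u ∈ A₁, ∑ v ∈ B₁, f (u, v) with hT11
  set D := T00 - T01 - (T10 - T11) with hD
  have hcA0 : A₀.card = 2 ^ n := by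
    rw [hn']; exact TX.card_node (l + 1) hl (2 * k) hkb
  have hcA1 : A₁.card = 2 ^ n := by
    rw [hn']; exact TX.card_node (l + 1) hl (2 * k + 1) hkb'
  have hcB0 : B₀.card = 2 ^ m := by
    rw [hm']; exact TY.card_node (s + 1) hs (2 * r) hrc
  have hcB1 : B₁.card = 2 ^ m := by
    rw [hm']; exact TY.card_node (s + 1) hs (2 * r + 1) hrc'
  -- the quadruple sum identity
  have hquad : ((2 ^ n : ℕ) : ℝ) * ((2 ^ m : ℕ) : ℝ) * D =
      ∑ u ∈ A₀, ∑ u' ∈ A₁, ∑ v ∈ B₀, ∑ v' ∈ B₁,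
        (f (u, v) - f (u', v) - f (u, v') + f (u', v')) := by
    simp only [Finset.sum_sub_distrib, Finset.sum_add_distrib, Finset.sum_const,
      nsmul_eq_mul, ← Finset.mul_sum, ← Finset.sum_mul, hcA0, hcA1, hcB0, hcB1]
    rw [hD, hT00, hT01, hT10, hT11]
    push_cast
    ring
  -- bound each bracket
  have hbr : ∀ u ∈ A₀, ∀ u' ∈ A₁, ∀ v ∈ B₀, ∀ v' ∈ B₁,
      |f (u, v) - f (u', v) - f (u, v') + f (u', v')| ≤
        C * ((2 : ℝ) ^ (-(l : ℝ))) ^ α * ((2 : ℝ) ^ (-(s : ℝ))) ^ α := by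
    intro u hu u' hu' v hv v' hv'
    refine le_trans (hf u u' v v') ?_
    have hsX : TX.sameNode l u u' :=
      ⟨k, hk, TX.child_subset_left hl hk hu, TX.child_subset_right hl hk hu'⟩
    have hsY : TY.sameNode s v v' :=
      ⟨r, hr, TY.child_subset_left hs hr hv, TY.child_subset_right hs hr hv'⟩
    have h1 : TX.rho u u' ^ α ≤ ((2 : ℝ) ^ (-(l : ℝ))) ^ α :=
      Real.rpow_le_rpow (TX.rho_nonneg u u') (TX.rho_le_of_sameNode hl.le hsX) hα.le
    have h2 : TY.rho v v' ^ α ≤ ((2 : ℝ) ^ (-(s : ℝ))) ^ α :=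
      Real.rpow_le_rpow (TY.rho_nonneg v v') (TY.rho_le_of_sameNode hs.le hsY) hα.le
    calc C * TX.rho u u' ^ α * TY.rho v v' ^ α
        ≤ C * ((2 : ℝ) ^ (-(l : ℝ))) ^ α * TY.rho v v' ^ α := by
          exact mul_le_mul_of_nonneg_right (mul_le_mul_of_nonneg_left h1 hC)
            (Real.rpow_nonneg (TY.rho_nonneg v v') α)
      _ ≤ C * ((2 : ℝ) ^ (-(l : ℝ))) ^ α * ((2 : ℝ) ^ (-(s : ℝ))) ^ α := by
          exact mul_le_mul_of_nonneg_left h2 (by positivity)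
  -- bound |D|
  have hP : (0 : ℝ) < ((2 ^ n : ℕ) : ℝ) * ((2 ^ m : ℕ) : ℝ) := by positivity
  have habs : ((2 ^ n : ℕ) : ℝ) * ((2 ^ m : ℕ) : ℝ) * |D| ≤
      ((2 ^ n : ℕ) : ℝ) * ((2 ^ m : ℕ) : ℝ) *
        (((2 ^ n : ℕ) : ℝ) * ((2 ^ m : ℕ) : ℝ) *
          (C * ((2 : ℝ) ^ (-(l : ℝ))) ^ α * ((2 : ℝ) ^ (-(s : ℝ))) ^ α)) := by
    rw [show ((2 ^ n : ℕ) : ℝ) * ((2 ^ m : ℕ) : ℝ) * |D| = |((2 ^ n : ℕ) : ℝ) * ((2 ^ m : ℕ) : ℝ) * D| by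
      rw [abs_mul, abs_of_pos hP]]
    rw [hquad]
    calc |∑ u ∈ A₀, ∑ u' ∈ A₁, ∑ v ∈ B₀, ∑ v' ∈ B₁,
          (f (u, v) - f (u', v) - f (u, v') + f (u', v'))|
        ≤ ∑ u ∈ A₀, ∑ u' ∈ A₁, ∑ v ∈ B₀, ∑ v' ∈ B₁,
            (C * ((2 : ℝ) ^ (-(l : ℝ))) ^ α * ((2 : ℝ) ^ (-(s : ℝ))) ^ α) := by
          refine le_trans (Finset.abs_sum_le_sum_abs _ _) (Finset.sum_le_sum fun u hu => ?_)
          refine le_trans (Finset.abs_sum_le_sum_abs _ _) (Finset.sum_le_sum fun u' hu' => ?_)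
          refine le_trans (Finset.abs_sum_le_sum_abs _ _) (Finset.sum_le_sum fun v hv => ?_)
          refine le_trans (Finset.abs_sum_le_sum_abs _ _) (Finset.sum_le_sum fun v' hv' => ?_)
          exact hbr u hu u' hu' v hv v' hv'
        _ = ((2 ^ n : ℕ) : ℝ) * ((2 ^ m : ℕ) : ℝ) *
            (((2 ^ n : ℕ) : ℝ) * ((2 ^ m : ℕ) : ℝ) *
              (C * ((2 : ℝ) ^ (-(l : ℝ))) ^ α * ((2 : ℝ) ^ (-(s : ℝ))) ^ α)) := by
          simp only [Finset.sum_const, nsmul_eq_mul, hcA0, hcA1, hcB0, hcB1]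
          push_cast
          ring
  have hDbound : |D| ≤ ((2 ^ n : ℕ) : ℝ) * ((2 ^ m : ℕ) : ℝ) *
      (C * ((2 : ℝ) ^ (-(l : ℝ))) ^ α * ((2 : ℝ) ^ (-(s : ℝ))) ^ α) :=
    le_of_mul_le_mul_left habs hP
  have hip : |ip2 f (tensorHaar TX TY l k s r)| =
      (2:ℝ) ^ ((l:ℝ)/2) * (2:ℝ) ^ ((s:ℝ)/2) * |D| / ((2:ℝ) ^ L * (2:ℝ) ^ S) := by
    rw [ip2_tensor_eq TX TY f l k s r]
    rw [abs_div, abs_mul, abs_mul,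
      abs_of_pos (by positivity : (0:ℝ) < (2:ℝ) ^ ((l:ℝ)/2)),
      abs_of_pos (by positivity : (0:ℝ) < (2:ℝ) ^ ((s:ℝ)/2)),
      abs_of_pos (by positivity : (0:ℝ) < (2:ℝ) ^ (L:ℕ) * (2:ℝ) ^ (S:ℕ))]
  have hnr : (L:ℝ) = (n:ℝ) + 1 + (l:ℝ) := by rw [hn]; push_cast; ring
  have hmr : (S:ℝ) = (m:ℝ) + 1 + (s:ℝ) := by rw [hm]; push_cast; ring
  have hEeq : (2:ℝ) ^ ((l:ℝ)/2) * (2:ℝ) ^ ((s:ℝ)/2) *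
      (((2 ^ n : ℕ) : ℝ) * ((2 ^ m : ℕ) : ℝ) *
        (C * ((2:ℝ) ^ (-(l:ℝ))) ^ α * ((2:ℝ) ^ (-(s:ℝ))) ^ α)) / ((2:ℝ) ^ L * (2:ℝ) ^ S) =
      C * (2:ℝ) ^ ((l:ℝ)/2 + ((s:ℝ)/2 + ((n:ℝ) + ((m:ℝ) +
        (-(l:ℝ)*α + (-(s:ℝ)*α + (-(L:ℝ) + -(S:ℝ)))))))) := by
    rw [Real.rpow_add two_pos, Real.rpow_add two_pos, Real.rpow_add two_pos,
      Real.rpow_add two_pos, Real.rpow_add two_pos, Real.rpow_add two_pos,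
      Real.rpow_add two_pos]
    rw [Real.rpow_mul (by norm_num : (0:ℝ) ≤ 2), Real.rpow_mul (by norm_num : (0:ℝ) ≤ 2)]
    rw [Real.rpow_neg (by norm_num : (0:ℝ) ≤ 2) (L:ℝ), Real.rpow_neg (by norm_num : (0:ℝ) ≤ 2) (S:ℝ),
      Real.rpow_natCast 2 L, Real.rpow_natCast 2 S, Real.rpow_natCast 2 n, Real.rpow_natCast 2 m]
    push_cast
    field_simp
  have hexp : (l:ℝ)/2 + ((s:ℝ)/2 + ((n:ℝ) + ((m:ℝ) +
      (-(l:ℝ)*α + (-(s:ℝ)*α + (-(L:ℝ) + -(S:ℝ))))))) ≤ -((l:ℝ) + (s:ℝ)) * (α + 1/2) := by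
    rw [hnr, hmr]
    ring_nf
    nlinarith [hα.le]
  calc |ip2 f (tensorHaar TX TY l k s r)|
      = (2:ℝ) ^ ((l:ℝ)/2) * (2:ℝ) ^ ((s:ℝ)/2) * |D| / ((2:ℝ) ^ L * (2:ℝ) ^ S) := hip
    _ ≤ (2:ℝ) ^ ((l:ℝ)/2) * (2:ℝ) ^ ((s:ℝ)/2) *
        (((2 ^ n : ℕ) : ℝ) * ((2 ^ m : ℕ) : ℝ) *
          (C * ((2:ℝ) ^ (-(l:ℝ))) ^ α * ((2:ℝ) ^ (-(s:ℝ))) ^ α)) / ((2:ℝ) ^ L * (2:ℝ) ^ S) := by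
        gcongr
    _ = C * (2:ℝ) ^ ((l:ℝ)/2 + ((s:ℝ)/2 + ((n:ℝ) + ((m:ℝ) +
        (-(l:ℝ)*α + (-(s:ℝ)*α + (-(L:ℝ) + -(S:ℝ)))))))) := hEeq
    _ ≤ C * (2:ℝ) ^ (-((l:ℝ) + (s:ℝ)) * (α + 1/2)) := by
        exact mul_le_mul_of_nonneg_left
          (Real.rpow_le_rpow_of_exponent_le one_le_two hexp) hC

end CoeffBound
namespace DyadicTree
variable {X : Type} [Fintype X] {L : ℕ}

lemma sameNode_zero (T : DyadicTree X L) (x x' : X) : T.sameNode 0 x x' :=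
  ⟨0, by norm_num, by rw [T.node_zero]; exact Finset.mem_univ x,
    by rw [T.node_zero]; exact Finset.mem_univ x'⟩

end DyadicTree

lemma double_telescope (g : ℕ → ℕ → ℝ) (L S : ℕ) :
    ∑ l ∈ Finset.range L, ∑ s ∈ Finset.range S,
      ((g (l+1) (s+1) - g (l+1) s) - (g l (s+1) - g l s)) =
      (g L S - g L 0) - (g 0 S - g 0 0) := by
  have inner : ∀ l', ∑ s ∈ Finset.range S,
      ((g (l'+1) (s+1) - g (l'+1) s) - (g l' (s+1) - g l' s)) =
      (g (l'+1) S - g (l'+1) 0) - (g l' S - g l' 0) := by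
    intro l'
    rw [Finset.sum_sub_distrib, Finset.sum_range_sub (fun s => g (l'+1) s),
      Finset.sum_range_sub (fun s => g l' s)]
  rw [Finset.sum_congr rfl fun l _ => inner l]
  exact Finset.sum_range_sub (fun l => g l S - g l 0) L

lemma geom_tail {α : ℝ} (hα : 0 < α) (m L : ℕ) :
    ∑ l ∈ Finset.range L, (if m ≤ l then (2:ℝ) ^ (-(l:ℝ) * α) else 0) ≤
      (2:ℝ) ^ (-(m:ℝ) * α) / (1 - (2:ℝ) ^ (-α)) := by
  have hr0 : (0:ℝ) < (2:ℝ) ^ (-α) := by positivity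
  have hr1 : (2:ℝ) ^ (-α) < 1 :=
    Real.rpow_lt_one_of_one_lt_of_neg one_lt_two (by linarith)
  rw [← Finset.sum_filter]
  have hsub : (Finset.range L).filter (fun l => m ≤ l) ⊆
      (Finset.range L).image (fun j => m + j) := by
    intro l hl
    simp only [Finset.mem_filter, Finset.mem_range] at hl
    simp only [Finset.mem_image, Finset.mem_range]
    exact ⟨l - m, by omega, by omega⟩
  refine le_trans (Finset.sum_le_sum_of_subset_of_nonneg hsub
    (by intros; positivity)) ?_
  rw [Finset.sum_image (fun a _ b _ h => by omega)]
  have hterm : ∀ j : ℕ, (2:ℝ) ^ (-((m + j : ℕ) : ℝ) * α) =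
      (2:ℝ) ^ (-(m:ℝ) * α) * ((2:ℝ) ^ (-α)) ^ j := by
    intro j
    rw [← Real.rpow_natCast ((2:ℝ) ^ (-α)) j, ← Real.rpow_mul (by norm_num : (0:ℝ) ≤ 2),
      ← Real.rpow_add two_pos]
    congr 1
    push_cast
    ring
  rw [Finset.sum_congr rfl fun j _ => hterm j, ← Finset.mul_sum]
  rw [div_eq_mul_inv]
  refine mul_le_mul_of_nonneg_left ?_ (by positivity)
  have h1r : (0:ℝ) < 1 - (2:ℝ) ^ (-α) := by linarith
  have key : ∑ i ∈ Finset.range L, ((2:ℝ) ^ (-α)) ^ i =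
      (1 - ((2:ℝ) ^ (-α)) ^ L) / (1 - (2:ℝ) ^ (-α)) := by
    rw [geom_sum_eq (ne_of_lt hr1)]
    rw [div_eq_div_iff (by linarith) (by linarith)]
    ring
  rw [key, inv_eq_one_div]
  gcongr
  nlinarith [pow_nonneg hr0.le L]
section Part2

variable {X Y : Type} [Fintype X] [Fintype Y] {L S : ℕ}

lemma PP_congr_fst (TX : DyadicTree X L) (TY : DyadicTree Y S) (f : X × Y → ℝ)
    {a : ℕ} (b : ℕ) {x x' : X} (y : Y) (haL : a ≤ L) (h : TX.sameNode a x x') :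
    PP TX TY a b f (x, y) = PP TX TY a b f (x', y) := by
  unfold PP
  simp only [TX.cell_congr haL h]

lemma PP_congr_snd (TX : DyadicTree X L) (TY : DyadicTree Y S) (f : X × Y → ℝ)
    (a : ℕ) {b : ℕ} (x : X) {y y' : Y} (hbS : b ≤ S) (h : TY.sameNode b y y') :
    PP TX TY a b f (x, y) = PP TX TY a b f (x, y') := by
  unfold PP
  simp only [TY.cell_congr hbS h]

lemma holder_from_coeff {α : ℝ} (hα : 0 < α) (C : ℝ)
    (TX : DyadicTree X L) (TY : DyadicTree Y S) (f : X × Y → ℝ)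
    (h : ∀ l < L, ∀ s < S, ∀ k < 2 ^ l, ∀ r < 2 ^ s,
      |ip2 f (tensorHaar TX TY l k s r)| ≤
        C * (2 : ℝ) ^ (-((l : ℝ) + (s : ℝ)) * (α + 1 / 2)))
    (x x' : X) (y y' : Y) :
    |f (x, y) - f (x', y) - f (x, y') + f (x', y')| ≤
      (4 * |C| / (1 - (2:ℝ) ^ (-α)) ^ 2) * TX.rho x x' ^ α * TY.rho y y' ^ α := by
  have hr0 : (0:ℝ) < (2:ℝ) ^ (-α) := by positivity
  have hr1 : (2:ℝ) ^ (-α) < 1 :=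
    Real.rpow_lt_one_of_one_lt_of_neg one_lt_two (by linarith)
  have h1r : (0:ℝ) < 1 - (2:ℝ) ^ (-α) := by linarith
  rcases eq_or_ne x x' with hxx | hxx
  · subst hxx
    have h0 : TX.rho x x = 0 := by unfold DyadicTree.rho; rw [if_pos rfl]
    have he : f (x, y) - f (x, y) - f (x, y') + f (x, y') = 0 := by ring
    rw [he, abs_zero, h0, Real.zero_rpow hα.ne']
    simp
  rcases eq_or_ne y y' with hyy | hyy
  · subst hyy
    have h0 : TY.rho y y = 0 := by unfold DyadicTree.rho; rw [if_pos rfl]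
    have he : f (x, y) - f (x', y) - f (x, y) + f (x', y) = 0 := by ring
    rw [he, abs_zero, h0, Real.zero_rpow hα.ne']
    simp
  -- main case
  set lstar := Nat.findGreatest (fun l => TX.sameNode l x x') L with hlstar
  set sstar := Nat.findGreatest (fun s => TY.sameNode s y y') S with hsstar
  have hls_le : lstar ≤ L := Nat.findGreatest_le L
  have hss_le : sstar ≤ S := Nat.findGreatest_le S
  have hls_same : TX.sameNode lstar x x' := by
    rw [hlstar]
    exact Nat.findGreatest_spec (P := fun l => TX.sameNode l x x') (Nat.zero_le L)
      (TX.sameNode_zero x x')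
  have hss_same : TY.sameNode sstar y y' := by
    rw [hsstar]
    exact Nat.findGreatest_spec (P := fun s => TY.sameNode s y y') (Nat.zero_le S)
      (TY.sameNode_zero y y')
  have hrx : TX.rho x x' = (2:ℝ) ^ (-(lstar:ℝ)) := TX.rho_eq hxx
  have hry : TY.rho y y' = (2:ℝ) ^ (-(sstar:ℝ)) := TY.rho_eq hyy
  set G : ℕ → ℕ → ℝ := fun a b =>
    PP TX TY a b f (x, y) - PP TX TY a b f (x', y) -
      (PP TX TY a b f (x, y') - PP TX TY a b f (x', y')) with hG
  have hGzero_x : ∀ a ≤ L, TX.sameNode a x x' → ∀ b, G a b = 0 := by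
    intro a haL ha b
    simp only [hG, PP_congr_fst TX TY f b y haL ha, PP_congr_fst TX TY f b y' haL ha]
    ring
  have hGzero_y : ∀ b ≤ S, TY.sameNode b y y' → ∀ a, G a b = 0 := by
    intro b hbS hb a
    simp only [hG, PP_congr_snd TX TY f a x hbS hb, PP_congr_snd TX TY f a x' hbS hb]
    ring
  have hGtop : G L S = f (x, y) - f (x', y) - (f (x, y') - f (x', y')) := by
    simp only [hG, PP_top]
  have hdt := double_telescope G L S
  rw [hGzero_y 0 (Nat.zero_le S) (TY.sameNode_zero y y') L,
    hGzero_x 0 (Nat.zero_le L) (TX.sameNode_zero x x') S,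
    hGzero_x 0 (Nat.zero_le L) (TX.sameNode_zero x x') 0] at hdt
  simp only [sub_zero, zero_sub, neg_zero] at hdt
  -- the per-term bound
  set u : ℕ → ℝ := fun l => if lstar ≤ l then (2:ℝ) ^ (-(l:ℝ) * α) else 0 with hu
  set v : ℕ → ℝ := fun s => if sstar ≤ s then (2:ℝ) ^ (-(s:ℝ) * α) else 0 with hv
  have hunn : ∀ l, 0 ≤ u l := by intro l; rw [hu]; dsimp; split <;> positivity
  have hvnn : ∀ s, 0 ≤ v s := by intro s; rw [hv]; dsimp; split <;> positivity
  have hsummand : ∀ l < L, ∀ s < S,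
      |(G (l+1) (s+1) - G (l+1) s) - (G l (s+1) - G l s)| ≤ 4 * |C| * u l * v s := by
    intro l hlL s hsS
    by_cases hll : lstar ≤ l
    · by_cases hss : sstar ≤ s
      · have hQQid : (G (l+1) (s+1) - G (l+1) s) - (G l (s+1) - G l s) =
            QQ TX TY l s f (x, y) - QQ TX TY l s f (x', y) -
              (QQ TX TY l s f (x, y') - QQ TX TY l s f (x', y')) := by
          simp only [hG]
          unfold QQ
          ring
        have hb := abs_QQ_le TX TY f hlL hsS (h l hlL s hsS)
        have hCt : ∀ p : X × Y, |QQ TX TY l s f p| ≤ |C| * (2:ℝ) ^ (-((l:ℝ)+(s:ℝ)) * α) := by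
          intro p
          refine le_trans (hb p) (mul_le_mul_of_nonneg_right (le_abs_self C) (by positivity))
        have hsplit : (2:ℝ) ^ (-((l:ℝ)+(s:ℝ)) * α) = (2:ℝ) ^ (-(l:ℝ)*α) * (2:ℝ) ^ (-(s:ℝ)*α) := by
          rw [← Real.rpow_add two_pos]
          congr 1
          ring
        rw [hQQid, hu, hv]
        dsimp
        rw [if_pos hll, if_pos hss]
        calc |QQ TX TY l s f (x, y) - QQ TX TY l s f (x', y) -
              (QQ TX TY l s f (x, y') - QQ TX TY l s f (x', y'))|
            ≤ |QQ TX TY l s f (x, y) - QQ TX TY l s f (x', y)| +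
              |QQ TX TY l s f (x, y') - QQ TX TY l s f (x', y')| := abs_sub _ _
          _ ≤ (|QQ TX TY l s f (x, y)| + |QQ TX TY l s f (x', y)|) +
              (|QQ TX TY l s f (x, y')| + |QQ TX TY l s f (x', y')|) :=
              add_le_add (abs_sub _ _) (abs_sub _ _)
          _ ≤ 4 * (|C| * (2:ℝ) ^ (-((l:ℝ)+(s:ℝ)) * α)) := by
              have h1 := hCt (x, y); have h2 := hCt (x', y)
              have h3 := hCt (x, y'); have h4 := hCt (x', y')
              linarith
          _ = 4 * |C| * (2:ℝ) ^ (-(l:ℝ)*α) * (2:ℝ) ^ (-(s:ℝ)*α) := by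
              rw [hsplit]; ring
      · -- s + 1 ≤ sstar : vanishing in y
        push_neg at hss
        have hsame1 : TY.sameNode (s+1) y y' := TY.sameNode_mono hss_le (by omega) hss_same
        have hsame0 : TY.sameNode s y y' := TY.sameNode_mono hss_le (by omega) hss_same
        have z1 := hGzero_y (s+1) (by omega) hsame1
        have z0 := hGzero_y s (by omega) hsame0
        rw [z1, z1, z0, z0]
        rw [hv]
        dsimp
        rw [if_neg (by omega)]
        simp [hunn l]
    · -- l + 1 ≤ lstar : vanishing in x
      push_neg at hll
      have hsame1 : TX.sameNode (l+1) x x' := TX.sameNode_mono hls_le (by omega) hls_same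
      have hsame0 : TX.sameNode l x x' := TX.sameNode_mono hls_le (by omega) hls_same
      have z1 := hGzero_x (l+1) (by omega) hsame1
      have z0 := hGzero_x l (by omega) hsame0
      rw [z1, z1, z0, z0]
      rw [hu]
      dsimp
      rw [if_neg (by omega)]
      simp [hvnn s]
  -- assemble
  have hmain : |f (x, y) - f (x', y) - f (x, y') + f (x', y')| ≤
      4 * |C| * (∑ l ∈ Finset.range L, u l) * (∑ s ∈ Finset.range S, v s) := by
    have heq : f (x, y) - f (x', y) - f (x, y') + f (x', y') = G L S := by
      rw [hGtop]; ring
    rw [heq, ← hdt]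
    calc |∑ l ∈ Finset.range L, ∑ s ∈ Finset.range S,
          ((G (l+1) (s+1) - G (l+1) s) - (G l (s+1) - G l s))|
        ≤ ∑ l ∈ Finset.range L, ∑ s ∈ Finset.range S,
            |(G (l+1) (s+1) - G (l+1) s) - (G l (s+1) - G l s)| := by
          refine le_trans (Finset.abs_sum_le_sum_abs _ _) (Finset.sum_le_sum fun l _ => ?_)
          exact Finset.abs_sum_le_sum_abs _ _
      _ ≤ ∑ l ∈ Finset.range L, ∑ s ∈ Finset.range S, (4 * |C| * u l * v s) := by
          refine Finset.sum_le_sum fun l hl => Finset.sum_le_sum fun s hs => ?_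
          exact hsummand l (Finset.mem_range.mp hl) s (Finset.mem_range.mp hs)
      _ = 4 * |C| * (∑ l ∈ Finset.range L, u l) * (∑ s ∈ Finset.range S, v s) := by
          calc ∑ l ∈ Finset.range L, ∑ s ∈ Finset.range S, (4 * |C| * u l * v s)
              = ∑ l ∈ Finset.range L, ((4 * |C| * u l) * ∑ s ∈ Finset.range S, v s) := by
                refine Finset.sum_congr rfl fun l _ => ?_
                rw [Finset.mul_sum]
            _ = 4 * |C| * (∑ l ∈ Finset.range L, u l) * (∑ s ∈ Finset.range S, v s) := by
                rw [← Finset.sum_mul, ← Finset.mul_sum]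
  refine le_trans hmain ?_
  have hgx : (∑ l ∈ Finset.range L, u l) ≤ (2:ℝ) ^ (-(lstar:ℝ) * α) / (1 - (2:ℝ) ^ (-α)) :=
    geom_tail hα lstar L
  have hgy : (∑ s ∈ Finset.range S, v s) ≤ (2:ℝ) ^ (-(sstar:ℝ) * α) / (1 - (2:ℝ) ^ (-α)) :=
    geom_tail hα sstar S
  have hsx : 0 ≤ ∑ l ∈ Finset.range L, u l := Finset.sum_nonneg fun l _ => hunn l
  have hsy : 0 ≤ ∑ s ∈ Finset.range S, v s := Finset.sum_nonneg fun s _ => hvnn s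
  calc 4 * |C| * (∑ l ∈ Finset.range L, u l) * (∑ s ∈ Finset.range S, v s)
      ≤ 4 * |C| * ((2:ℝ) ^ (-(lstar:ℝ) * α) / (1 - (2:ℝ) ^ (-α))) *
        ((2:ℝ) ^ (-(sstar:ℝ) * α) / (1 - (2:ℝ) ^ (-α))) := by
        have step1 : 4 * |C| * (∑ l ∈ Finset.range L, u l) ≤
            4 * |C| * ((2:ℝ) ^ (-(lstar:ℝ) * α) / (1 - (2:ℝ) ^ (-α))) :=
          mul_le_mul_of_nonneg_left hgx (by positivity)
        refine le_trans (mul_le_mul_of_nonneg_right step1 hsy) ?_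
        exact mul_le_mul_of_nonneg_left hgy (by positivity)
    _ = (4 * |C| / (1 - (2:ℝ) ^ (-α)) ^ 2) * TX.rho x x' ^ α * TY.rho y y' ^ α := by
        rw [hrx, hry, ← Real.rpow_mul (by norm_num : (0:ℝ) ≤ 2),
          ← Real.rpow_mul (by norm_num : (0:ℝ) ≤ 2)]
        field_simp

end Part2
/-- (i) The rectangular Hölder condition of order `α` with constant `C`
implies `|⟨f, ψ^l_k ⊗ ψ^s_r⟩| ≤ C·2^{−(l+s)(α+1/2)}` for every tensor Haar function.
(ii) Conversely, this coefficient decay implies the rectangular Hölder condition of order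
`α` with a constant depending only on `C` and `α`. -/
theorem tensor_haar_coefficient_characterization (α : ℝ) (hα : 0 < α) :
    (∀ (C : ℝ) (L S : ℕ) (X Y : Type) [Fintype X] [Fintype Y]
        (TX : DyadicTree X L) (TY : DyadicTree Y S) (f : X × Y → ℝ),
      (∀ x x' : X, ∀ y y' : Y,
        |f (x, y) - f (x', y) - f (x, y') + f (x', y')| ≤
          C * TX.rho x x' ^ α * TY.rho y y' ^ α) →
      ∀ l < L, ∀ s < S, ∀ k < 2 ^ l, ∀ r < 2 ^ s,
        |ip2 f (tensorHaar TX TY l k s r)| ≤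
          C * (2 : ℝ) ^ (-((l : ℝ) + (s : ℝ)) * (α + 1 / 2))) ∧
    (∀ C : ℝ, ∃ C' : ℝ, ∀ (L S : ℕ) (X Y : Type) [Fintype X] [Fintype Y]
        (TX : DyadicTree X L) (TY : DyadicTree Y S) (f : X × Y → ℝ),
      (∀ l < L, ∀ s < S, ∀ k < 2 ^ l, ∀ r < 2 ^ s,
        |ip2 f (tensorHaar TX TY l k s r)| ≤
          C * (2 : ℝ) ^ (-((l : ℝ) + (s : ℝ)) * (α + 1 / 2))) →
      ∀ x x' : X, ∀ y y' : Y,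
        |f (x, y) - f (x', y) - f (x, y') + f (x', y')| ≤
          C' * TX.rho x x' ^ α * TY.rho y y' ^ α) := by
  constructor
  · intro C L S X Y _ _ TX TY f hf l hl s hs k hk r hr
    exact coeff_bound hα TX TY f hf hl hs hk hr
  · intro C
    refine ⟨4 * |C| / (1 - (2:ℝ) ^ (-α)) ^ 2, ?_⟩
    intro L S X Y _ _ TX TY f hcoef x x' y y'
    exact holder_from_coeff hα C TX TY f hcoef x x' y y'
end

section
/- Let α > 0 and M > 0. Suppose g : X×Y → ℝ can be written as g = Σ_{l=0}^{L−1} Σ_{s=0}^{S−1} g_{l,s}, where each g_{l,s} is constant on every set of the form N × M' with N a level-(l+1) node of X and M' a level-(s+1) node of Y, and sup |g_{l,s}| ≤ M·2^{−2α(l+s)} (in particular this holds when the expansion coefficients satisfy |η^{l,s}| ≤ M·2^{−(l+s)(2α+1)}). Then g ∈ Λ_{2α}(X×Y) with a constant C·M, where C depends only on α. -/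
open scoped Classical
open Finset

namespace ProofAux

variable {X : Type} [Fintype X] {L : ℕ}

lemma sameNode_refl (T : DyadicTree X L) {l : ℕ} (hl : l ≤ L) (x : X) :
    T.sameNode l x x := by
  obtain ⟨k, hk, hx⟩ := T.cover l hl x
  exact ⟨k, hk, hx, hx⟩

lemma sameNode_of_succ (T : DyadicTree X L) {l : ℕ} (hl : l < L) {x x' : X}
    (h : T.sameNode (l + 1) x x') : T.sameNode l x x' := by
  obtain ⟨k, hk, hx, hx'⟩ := h
  have h2 : 2 ^ (l + 1) = 2 ^ l * 2 := by rw [pow_succ]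
  have hk2 : k / 2 < 2 ^ l := by omega
  have hsub : T.node (l + 1) k ⊆ T.node l (k / 2) := by
    rw [T.children l hl (k / 2) hk2]
    rcases (by omega : k = 2 * (k / 2) ∨ k = 2 * (k / 2) + 1) with h | h
    · rw [← h]; exact Finset.subset_union_left
    · rw [← h]; exact Finset.subset_union_right
  exact ⟨k / 2, hk2, hsub hx, hsub hx'⟩

lemma sameNode_mono (T : DyadicTree X L) {x x' : X} :
    ∀ m, m ≤ L → ∀ l, l ≤ m → T.sameNode m x x' → T.sameNode l x x' := by
  intro m
  induction m with
  | zero =>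
    intro _ l hl h
    obtain rfl : l = 0 := Nat.le_zero.mp hl
    exact h
  | succ n ih =>
    intro hm l hl h
    rcases eq_or_lt_of_le hl with rfl | h'
    · exact h
    · exact ih (by omega) l (by omega) (sameNode_of_succ T (by omega) h)

lemma sameNode_base (T : DyadicTree X L) (x x' : X) : T.sameNode 0 x x' :=
  ⟨0, by norm_num, by rw [T.node_zero]; exact Finset.mem_univ x,
    by rw [T.node_zero]; exact Finset.mem_univ x'⟩

/-- If `l` is below the greatest common level, then `x, x'` share a level-`(l+1)` node. -/
lemma sameNode_of_lt_findGreatest (T : DyadicTree X L) (x x' : X) (l : ℕ)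
    (hl : l < Nat.findGreatest (fun j => T.sameNode j x x') L) :
    T.sameNode (l + 1) x x' := by
  have hle := Nat.findGreatest_le (P := fun j => T.sameNode j x x') L
  exact sameNode_mono T _ hle (l + 1) (by omega)
    (Nat.findGreatest_spec (P := fun j => T.sameNode j x x') (Nat.zero_le L) (sameNode_base T x x'))

lemma rho_nonneg (T : DyadicTree X L) (x x' : X) : 0 ≤ T.rho x x' := by
  rw [DyadicTree.rho]
  split
  · exact le_refl 0
  · exact (Real.rpow_pos_of_pos (by norm_num) _).le

lemma gsum_range_le {q : ℝ} (hq0 : 0 ≤ q) (hq1 : q < 1) (n : ℕ) :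
    ∑ i ∈ Finset.range n, q ^ i ≤ 1 / (1 - q) := by
  have h := Summable.sum_le_tsum (Finset.range n) (fun i _ => pow_nonneg hq0 i)
    (summable_geometric_of_lt_one hq0 hq1)
  rw [tsum_geometric_of_lt_one hq0 hq1] at h
  rw [one_div]
  exact h

lemma gsum_Ico_le {q : ℝ} (hq0 : 0 ≤ q) (hq1 : q < 1) (m n : ℕ) :
    ∑ i ∈ Finset.Ico m n, q ^ i ≤ q ^ m / (1 - q) := by
  rw [Finset.sum_Ico_eq_sum_range]
  simp_rw [pow_add]
  rw [← Finset.mul_sum]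
  calc q ^ m * ∑ i ∈ Finset.range (n - m), q ^ i
      ≤ q ^ m * (1 / (1 - q)) :=
        mul_le_mul_of_nonneg_left (gsum_range_le hq0 hq1 _) (pow_nonneg hq0 m)
    _ = q ^ m / (1 - q) := by ring

/-- Master estimate: a double sum of terms vanishing below levels `(m, m')` and bounded
geometrically is bounded by `B q^m q^{m'} / (1-q)²`. -/
lemma master {q B : ℝ} (hq0 : 0 ≤ q) (hq1 : q < 1) (hB : 0 ≤ B)
    (L S m m' : ℕ) (d : ℕ → ℕ → ℝ)
    (hz : ∀ l < L, ∀ s < S, (l < m ∨ s < m') → d l s = 0)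
    (hb : ∀ l < L, ∀ s < S, |d l s| ≤ B * (q ^ l * q ^ s)) :
    |∑ l ∈ Finset.range L, ∑ s ∈ Finset.range S, d l s| ≤
      B * (q ^ m * q ^ m') / (1 - q) ^ 2 := by
  have h1q : 0 < 1 - q := by linarith
  have hIcoL : Finset.Ico m L ⊆ Finset.range L := fun i hi =>
    Finset.mem_range.mpr (Finset.mem_Ico.mp hi).2
  have hIcoS : Finset.Ico m' S ⊆ Finset.range S := fun i hi =>
    Finset.mem_range.mpr (Finset.mem_Ico.mp hi).2
  calc |∑ l ∈ Finset.range L, ∑ s ∈ Finset.range S, d l s|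
      ≤ ∑ l ∈ Finset.range L, ∑ s ∈ Finset.range S, |d l s| :=
        (Finset.abs_sum_le_sum_abs _ _).trans
          (Finset.sum_le_sum fun l _ => Finset.abs_sum_le_sum_abs _ _)
    _ = ∑ l ∈ Finset.range L, ∑ s ∈ Finset.Ico m' S, |d l s| := by
        refine Finset.sum_congr rfl fun l hl => ?_
        refine (Finset.sum_subset hIcoS fun s hs hs' => ?_).symm
        have hsS := Finset.mem_range.mp hs
        have hsm : s < m' := by
          rcases Nat.lt_or_ge s m' with h | h
          · exact h
          · exact absurd (Finset.mem_Ico.mpr ⟨h, hsS⟩) hs'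
        rw [hz l (Finset.mem_range.mp hl) s hsS (Or.inr hsm), abs_zero]
    _ = ∑ l ∈ Finset.Ico m L, ∑ s ∈ Finset.Ico m' S, |d l s| := by
        refine (Finset.sum_subset hIcoL fun l hl hl' => ?_).symm
        have hlL := Finset.mem_range.mp hl
        have hlm : l < m := by
          rcases Nat.lt_or_ge l m with h | h
          · exact h
          · exact absurd (Finset.mem_Ico.mpr ⟨h, hlL⟩) hl'
        refine Finset.sum_eq_zero fun s hs => ?_
        rw [hz l hlL s (Finset.mem_Ico.mp hs).2 (Or.inl hlm), abs_zero]
    _ ≤ ∑ l ∈ Finset.Ico m L, ∑ s ∈ Finset.Ico m' S, B * (q ^ l * q ^ s) := by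
        refine Finset.sum_le_sum fun l hl => Finset.sum_le_sum fun s hs => ?_
        exact hb l (Finset.mem_Ico.mp hl).2 s (Finset.mem_Ico.mp hs).2
    _ = B * ((∑ l ∈ Finset.Ico m L, q ^ l) * (∑ s ∈ Finset.Ico m' S, q ^ s)) := by
        rw [Finset.sum_mul_sum, Finset.mul_sum]
        exact Finset.sum_congr rfl fun l _ => by rw [Finset.mul_sum]
    _ ≤ B * ((q ^ m / (1 - q)) * (q ^ m' / (1 - q))) := by
        refine mul_le_mul_of_nonneg_left ?_ hB
        exact mul_le_mul (gsum_Ico_le hq0 hq1 m L) (gsum_Ico_le hq0 hq1 m' S)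
          (Finset.sum_nonneg fun i _ => pow_nonneg hq0 i)
          (div_nonneg (pow_nonneg hq0 m) h1q.le)
    _ = B * (q ^ m * q ^ m') / (1 - q) ^ 2 := by rw [div_mul_div_comm, ← sq, ← mul_div_assoc]

end ProofAux

/-- If `g = Σ_{l<L} Σ_{s<S} g_{l,s}` where each `g_{l,s}` is constant on
every product of a level-`(l+1)` node of `X` with a level-`(s+1)` node of `Y` and
`sup |g_{l,s}| ≤ M·2^{−2α(l+s)}`, then `g ∈ Λ_{2α}(X×Y)` with constant `C·M`, where `C`
depends only on `α`. -/
theorem sum_of_piecewise_constant_is_Holder_tensor (α M : ℝ) (hα : 0 < α) (hM : 0 < M) :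
    ∃ C > 0, ∀ (L S : ℕ) (X Y : Type) [Fintype X] [Fintype Y]
      (TX : DyadicTree X L) (TY : DyadicTree Y S)
      (g : X × Y → ℝ) (G : ℕ → ℕ → X × Y → ℝ),
      (∀ p : X × Y, g p = ∑ l ∈ Finset.range L, ∑ s ∈ Finset.range S, G l s p) →
      (∀ l < L, ∀ s < S, ∀ p q : X × Y,
        TX.sameNode (l + 1) p.1 q.1 → TY.sameNode (s + 1) p.2 q.2 → G l s p = G l s q) →
      (∀ l < L, ∀ s < S, ∀ p : X × Y,
        |G l s p| ≤ M * (2 : ℝ) ^ (-(2 * α) * ((l : ℝ) + (s : ℝ)))) →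
      HolderRect TX TY (2 * α) (C * M) g := by
  have h2pos : (0 : ℝ) < 2 := by norm_num
  set q : ℝ := (2 : ℝ) ^ (-(2 * α)) with hqdef
  have hq0 : 0 < q := Real.rpow_pos_of_pos h2pos _
  have hq1 : q < 1 := Real.rpow_lt_one_of_one_lt_of_neg (by norm_num) (by linarith)
  have h1q : 0 < 1 - q := by linarith
  refine ⟨4 / (1 - q) ^ 2, by positivity, ?_⟩
  intro L S X Y _instX _instY TX TY g G hsum hconst hbd
  have hql : ∀ n : ℕ, q ^ n = (2 : ℝ) ^ (-(2 * α) * (n : ℝ)) := by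
    intro n
    rw [hqdef, ← Real.rpow_natCast ((2 : ℝ) ^ (-(2 * α))) n, ← Real.rpow_mul (by norm_num)]
  have hprod : ∀ l s : ℕ,
      (2 : ℝ) ^ (-(2 * α) * ((l : ℝ) + (s : ℝ))) = q ^ l * q ^ s := by
    intro l s
    rw [hql, hql, ← Real.rpow_add h2pos]
    congr 1; ring
  have hbd' : ∀ l < L, ∀ s < S, ∀ p : X × Y, |G l s p| ≤ M * (q ^ l * q ^ s) := by
    intro l hl s hs p
    rw [← hprod]
    exact hbd l hl s hs p
  have hMqs : ∀ l s : ℕ, 0 ≤ M * (q ^ l * q ^ s) := fun l s =>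
    mul_nonneg hM.le (mul_nonneg (pow_nonneg hq0.le l) (pow_nonneg hq0.le s))
  have hrhoX : ∀ x x' : X, x ≠ x' →
      TX.rho x x' ^ (2 * α) = q ^ (Nat.findGreatest (fun j => TX.sameNode j x x') L) := by
    intro x x' hxx
    rw [DyadicTree.rho, if_neg hxx, ← Real.rpow_mul (by norm_num : (0:ℝ) ≤ 2), hql]
    congr 1; ring
  have hrhoY : ∀ y y' : Y, y ≠ y' →
      TY.rho y y' ^ (2 * α) = q ^ (Nat.findGreatest (fun j => TY.sameNode j y y') S) := by
    intro y y' hyy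
    rw [DyadicTree.rho, if_neg hyy, ← Real.rpow_mul (by norm_num : (0:ℝ) ≤ 2), hql]
    congr 1; ring
  have h4M : (0 : ℝ) ≤ 4 * M := by linarith
  refine ⟨?_, ?_, ?_⟩
  · -- mixed difference
    intro x x' y y'
    by_cases hx : x = x'
    · subst hx
      have h0 : g (x, y) - g (x, y) - g (x, y') + g (x, y') = 0 := by ring
      rw [h0, abs_zero]
      have hr1 := ProofAux.rho_nonneg TX x x
      have hr2 := ProofAux.rho_nonneg TY y y'
      exact mul_nonneg (mul_nonneg (mul_nonneg (by positivity) hM.le)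
        (Real.rpow_nonneg hr1 _)) (Real.rpow_nonneg hr2 _)
    by_cases hy : y = y'
    · subst hy
      have h0 : g (x, y) - g (x', y) - g (x, y) + g (x', y) = 0 := by ring
      rw [h0, abs_zero]
      have hr1 := ProofAux.rho_nonneg TX x x'
      have hr2 := ProofAux.rho_nonneg TY y y
      exact mul_nonneg (mul_nonneg (mul_nonneg (by positivity) hM.le)
        (Real.rpow_nonneg hr1 _)) (Real.rpow_nonneg hr2 _)
    have key := ProofAux.master hq0.le hq1 h4M L S
      (Nat.findGreatest (fun j => TX.sameNode j x x') L)
      (Nat.findGreatest (fun j => TY.sameNode j y y') S)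
      (fun l s => G l s (x, y) - G l s (x', y) - G l s (x, y') + G l s (x', y'))
      (by
        intro l hl s hs h
        show G l s (x, y) - G l s (x', y) - G l s (x, y') + G l s (x', y') = 0
        rcases h with h | h
        · have hsx := ProofAux.sameNode_of_lt_findGreatest TX x x' l h
          have h1 : G l s (x, y) = G l s (x', y) :=
            hconst l hl s hs (x, y) (x', y) hsx (ProofAux.sameNode_refl (l := s + 1) TY (by omega) y)
          have h2 : G l s (x, y') = G l s (x', y') :=
            hconst l hl s hs (x, y') (x', y') hsx (ProofAux.sameNode_refl (l := s + 1) TY (by omega) y')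
          rw [h1, h2]; ring
        · have hsy := ProofAux.sameNode_of_lt_findGreatest TY y y' s h
          have h1 : G l s (x, y) = G l s (x, y') :=
            hconst l hl s hs (x, y) (x, y') (ProofAux.sameNode_refl (l := l + 1) TX (by omega) x) hsy
          have h2 : G l s (x', y) = G l s (x', y') :=
            hconst l hl s hs (x', y) (x', y') (ProofAux.sameNode_refl (l := l + 1) TX (by omega) x') hsy
          rw [h1, h2]; ring)
      (by
        intro l hl s hs
        have b1 := hbd' l hl s hs (x, y)
        have b2 := hbd' l hl s hs (x', y)
        have b3 := hbd' l hl s hs (x, y')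
        have b4 := hbd' l hl s hs (x', y')
        have habs : |G l s (x, y) - G l s (x', y) - G l s (x, y') + G l s (x', y')| ≤
            |G l s (x, y) - G l s (x', y)| + |G l s (x, y') - G l s (x', y')| := by
          rw [show G l s (x, y) - G l s (x', y) - G l s (x, y') + G l s (x', y') =
            (G l s (x, y) - G l s (x', y)) - (G l s (x, y') - G l s (x', y')) from by ring]
          exact abs_sub _ _
        have h1 := abs_sub (G l s (x, y)) (G l s (x', y))
        have h2 := abs_sub (G l s (x, y')) (G l s (x', y'))
        calc |G l s (x, y) - G l s (x', y) - G l s (x, y') + G l s (x', y')|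
            ≤ |G l s (x, y) - G l s (x', y)| + |G l s (x, y') - G l s (x', y')| := habs
          _ ≤ 4 * M * (q ^ l * q ^ s) := by linarith)
    have hsum4 : g (x, y) - g (x', y) - g (x, y') + g (x', y') =
        ∑ l ∈ Finset.range L, ∑ s ∈ Finset.range S,
          (G l s (x, y) - G l s (x', y) - G l s (x, y') + G l s (x', y')) := by
      simp only [hsum, ← Finset.sum_sub_distrib, ← Finset.sum_add_distrib]
    rw [hsum4, hrhoX x x' hx, hrhoY y y' hy]
    exact key.trans (le_of_eq (by ring))
  · -- x-difference
    intro x x' y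
    by_cases hx : x = x'
    · subst hx
      rw [sub_self, abs_zero, DyadicTree.rho, if_pos rfl,
        Real.zero_rpow (by positivity : 2 * α ≠ 0), mul_zero]
    have key := ProofAux.master hq0.le hq1 h4M L S
      (Nat.findGreatest (fun j => TX.sameNode j x x') L) 0
      (fun l s => G l s (x, y) - G l s (x', y))
      (by
        intro l hl s hs h
        show G l s (x, y) - G l s (x', y) = 0
        rcases h with h | h
        · have hsx := ProofAux.sameNode_of_lt_findGreatest TX x x' l h
          have h1 : G l s (x, y) = G l s (x', y) :=
            hconst l hl s hs (x, y) (x', y) hsx (ProofAux.sameNode_refl (l := s + 1) TY (by omega) y)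
          rw [h1]; ring
        · exact absurd h (Nat.not_lt_zero s))
      (by
        intro l hl s hs
        have b1 := hbd' l hl s hs (x, y)
        have b2 := hbd' l hl s hs (x', y)
        have h1 := abs_sub (G l s (x, y)) (G l s (x', y))
        have h3 := hMqs l s
        calc |G l s (x, y) - G l s (x', y)| ≤ |G l s (x, y)| + |G l s (x', y)| := h1
          _ ≤ 4 * M * (q ^ l * q ^ s) := by linarith)
    have hsum2 : g (x, y) - g (x', y) =
        ∑ l ∈ Finset.range L, ∑ s ∈ Finset.range S, (G l s (x, y) - G l s (x', y)) := by
      simp only [hsum, ← Finset.sum_sub_distrib]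
    rw [hsum2, hrhoX x x' hx]
    exact key.trans (le_of_eq (by ring))
  · -- y-difference
    intro x y y'
    by_cases hy : y = y'
    · subst hy
      rw [sub_self, abs_zero, DyadicTree.rho, if_pos rfl,
        Real.zero_rpow (by positivity : 2 * α ≠ 0), mul_zero]
    have key := ProofAux.master hq0.le hq1 h4M L S 0
      (Nat.findGreatest (fun j => TY.sameNode j y y') S)
      (fun l s => G l s (x, y) - G l s (x, y'))
      (by
        intro l hl s hs h
        show G l s (x, y) - G l s (x, y') = 0
        rcases h with h | h
        · exact absurd h (Nat.not_lt_zero l)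
        · have hsy := ProofAux.sameNode_of_lt_findGreatest TY y y' s h
          have h1 : G l s (x, y) = G l s (x, y') :=
            hconst l hl s hs (x, y) (x, y') (ProofAux.sameNode_refl (l := l + 1) TX (by omega) x) hsy
          rw [h1]; ring)
      (by
        intro l hl s hs
        have b1 := hbd' l hl s hs (x, y)
        have b2 := hbd' l hl s hs (x, y')
        have h1 := abs_sub (G l s (x, y)) (G l s (x, y'))
        have h3 := hMqs l s
        calc |G l s (x, y) - G l s (x, y')| ≤ |G l s (x, y)| + |G l s (x, y')| := h1
          _ ≤ 4 * M * (q ^ l * q ^ s) := by linarith)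
    have hsum2 : g (x, y) - g (x, y') =
        ∑ l ∈ Finset.range L, ∑ s ∈ Finset.range S, (G l s (x, y) - G l s (x, y')) := by
      simp only [hsum, ← Finset.sum_sub_distrib]
    rw [hsum2, hrhoY y y' hy]
    exact key.trans (le_of_eq (by ring))
end

section
/- Let α > 0 and let f ∈ Λ_α(X) with constant C. Then for every 0 ≤ l ≤ L the averaged function P^l f also belongs to Λ_α(X) with the same constant C: |P^l f(x) − P^l f(x')| ≤ C ρ(x,x')^α for all x, x' ∈ X. -/
open scoped Classical
open Finset

section AuxHolder

variable {X : Type} [Fintype X] {L : ℕ} (T : DyadicTree X L)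

lemma aux_node_unique {l k k' : ℕ} (hl : l ≤ L) (hk : k < 2 ^ l) (hk' : k' < 2 ^ l)
    {x : X} (h1 : x ∈ T.node l k) (h2 : x ∈ T.node l k') : k = k' := by
  by_contra h
  exact Finset.disjoint_left.mp (T.disj l hl k hk k' hk' h) h1 h2

lemma aux_sameNode_succ {l : ℕ} (hl : l + 1 ≤ L) {x x' : X}
    (h : T.sameNode (l + 1) x x') : T.sameNode l x x' := by
  obtain ⟨k, hk, hx, hx'⟩ := h
  have hk2 : k / 2 < 2 ^ l := by
    have h2 : k < 2 ^ l * 2 := by rw [pow_succ] at hk; omega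
    omega
  have hch := T.children l (by omega) (k / 2) hk2
  have hcases : k = 2 * (k / 2) ∨ k = 2 * (k / 2) + 1 := by omega
  refine ⟨k / 2, hk2, ?_, ?_⟩ <;> rw [hch, Finset.mem_union] <;>
    rcases hcases with h' | h' <;> rw [h'] at hx hx' <;> tauto

lemma aux_sameNode_mono {m l : ℕ} (hm : m ≤ l) (hl : l ≤ L) {x x' : X}
    (h : T.sameNode l x x') : T.sameNode m x x' := by
  induction l with
  | zero => exact (Nat.le_zero.mp hm) ▸ h
  | succ n ih =>
    rcases Nat.lt_or_ge m (n + 1) with h' | h'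
    · exact ih (by omega) (by omega) (aux_sameNode_succ T hl h)
    · have he : m = n + 1 := by omega
      exact he ▸ h

lemma aux_sameNode_self {l : ℕ} (hl : l ≤ L) (x : X) : T.sameNode l x x := by
  obtain ⟨k, hk, hx⟩ := T.cover l hl x
  exact ⟨k, hk, hx, hx⟩

lemma aux_sameNode_symm {l : ℕ} {x x' : X} (h : T.sameNode l x x') : T.sameNode l x' x := by
  obtain ⟨k, hk, hx, hx'⟩ := h
  exact ⟨k, hk, hx', hx⟩

lemma aux_sameNode_trans {l : ℕ} (hl : l ≤ L) {x y z : X}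
    (h1 : T.sameNode l x y) (h2 : T.sameNode l y z) : T.sameNode l x z := by
  obtain ⟨k, hk, hx, hy⟩ := h1
  obtain ⟨k', hk', hy', hz⟩ := h2
  have : k' = k := aux_node_unique T hl hk' hk hy' hy
  exact ⟨k, hk, hx, this ▸ hz⟩

lemma aux_mem_cell_iff {l : ℕ} {x y : X} : y ∈ T.cell l x ↔ T.sameNode l x y := by
  simp [DyadicTree.cell]

lemma aux_cell_eq {l : ℕ} (hl : l ≤ L) (x : X) :
    ∃ k < 2 ^ l, x ∈ T.node l k ∧ T.cell l x = T.node l k := by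
  obtain ⟨k, hk, hx⟩ := T.cover l hl x
  refine ⟨k, hk, hx, ?_⟩
  ext y
  rw [aux_mem_cell_iff]
  constructor
  · rintro ⟨k', hk', hxk', hyk'⟩
    have : k' = k := aux_node_unique T hl hk' hk hxk' hx
    exact this ▸ hyk'
  · intro hy
    exact ⟨k, hk, hx, hy⟩

lemma aux_findGreatest_congr {p q : ℕ → Prop} [DecidablePred p] [DecidablePred q]
    {n : ℕ} (h : ∀ m ≤ n, (p m ↔ q m)) : Nat.findGreatest p n = Nat.findGreatest q n := by
  induction n with
  | zero => rfl
  | succ n ih =>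
    rw [Nat.findGreatest_succ, Nat.findGreatest_succ]
    have hiff := h (n + 1) le_rfl
    by_cases hp : p (n + 1)
    · rw [if_pos hp, if_pos (hiff.mp hp)]
    · rw [if_neg hp, if_neg (fun hq => hp (hiff.mpr hq)),
        ih (fun m hm => h m (by omega))]

lemma aux_rho_eq {l : ℕ} (hl : l ≤ L) {x x' y y' : X}
    (hnot : ¬ T.sameNode l x x') (hy : T.sameNode l x y) (hy' : T.sameNode l x' y') :
    T.rho y y' = T.rho x x' := by
  have hxx : x ≠ x' := fun h => hnot (h ▸ aux_sameNode_self T hl x)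
  have hyy : y ≠ y' := by
    intro h
    subst h
    exact hnot (aux_sameNode_trans T hl hy (aux_sameNode_symm T hy'))
  have hiff : ∀ m ≤ L, (T.sameNode m y y' ↔ T.sameNode m x x') := by
    intro m hm
    by_cases hml : l ≤ m
    · constructor
      · intro h
        exact absurd (aux_sameNode_trans T hl hy (aux_sameNode_trans T hl
          (aux_sameNode_mono T hml hm h) (aux_sameNode_symm T hy'))) hnot
      · intro h
        exact absurd (aux_sameNode_mono T hml hm h) hnot
    · push_neg at hml
      have hmL : m ≤ L := hm
      have hxy : T.sameNode m x y := aux_sameNode_mono T (by omega) hl hy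
      have hx'y' : T.sameNode m x' y' := aux_sameNode_mono T (by omega) hl hy'
      constructor
      · intro h
        exact aux_sameNode_trans T hmL hxy
          (aux_sameNode_trans T hmL h (aux_sameNode_symm T hx'y'))
      · intro h
        exact aux_sameNode_trans T hmL (aux_sameNode_symm T hxy)
          (aux_sameNode_trans T hmL h hx'y')
  unfold DyadicTree.rho
  rw [if_neg hyy, if_neg hxx, aux_findGreatest_congr hiff]

end AuxHolder

/-- If `f ∈ Λ_α(X)` with constant `C` then for every `0 ≤ l ≤ L` the
averaged function `P^l f` lies in `Λ_α(X)` with the same constant `C`. -/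
theorem averaging_preserves_Holder (α : ℝ) (hα : 0 < α)
    {X : Type} [Fintype X] {L : ℕ} (T : DyadicTree X L)
    (C : ℝ) (f : X → ℝ) (hf : T.Holder α C f) :
    ∀ l ≤ L, T.Holder α C (T.avg l f) := by
  intro l hl x x'
  by_cases hxx : x = x'
  · subst hxx
    have hr : T.rho x x = 0 := by simp [DyadicTree.rho]
    rw [sub_self, abs_zero, hr, Real.zero_rpow hα.ne', mul_zero]
  by_cases hsame : T.sameNode l x x'
  · -- same cell: averages are equal, RHS nonnegative
    obtain ⟨k, hk, hxk, hx'k⟩ := hsame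
    obtain ⟨k1, hk1, hxk1, hc1⟩ := aux_cell_eq T hl x
    obtain ⟨k2, hk2, hx'k2, hc2⟩ := aux_cell_eq T hl x'
    have e1 : k1 = k := aux_node_unique T hl hk1 hk hxk1 hxk
    have e2 : k2 = k := aux_node_unique T hl hk2 hk hx'k2 hx'k
    have hcc : T.cell l x = T.cell l x' := by rw [hc1, hc2, e1, e2]
    have havg : T.avg l f x = T.avg l f x' := by unfold DyadicTree.avg; rw [hcc]
    rw [havg, sub_self, abs_zero]
    have hrpos : 0 < T.rho x x' := by
      unfold DyadicTree.rho
      rw [if_neg hxx]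
      positivity
    have hC : 0 ≤ C := by
      have h0 := hf x x'
      have h1 : (0:ℝ) < T.rho x x' ^ α := Real.rpow_pos_of_pos hrpos α
      nlinarith [abs_nonneg (f x - f x')]
    exact mul_nonneg hC (Real.rpow_nonneg hrpos.le α)
  · -- different cells
    obtain ⟨k1, hk1, hxk1, hc1⟩ := aux_cell_eq T hl x
    obtain ⟨k2, hk2, hx'k2, hc2⟩ := aux_cell_eq T hl x'
    have hcard1 : (T.cell l x).card = 2 ^ (L - l) := by
      rw [hc1]; exact T.card_node l hl k1 hk1
    have hcard2 : (T.cell l x').card = 2 ^ (L - l) := by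
      rw [hc2]; exact T.card_node l hl k2 hk2
    set n : ℝ := ((2 ^ (L - l) : ℕ) : ℝ) with hn
    have hnpos : 0 < n := by positivity
    have key : T.avg l f x - T.avg l f x' =
        (∑ y ∈ T.cell l x, ∑ y' ∈ T.cell l x', (f y - f y')) / (n * n) := by
      have expand : ∑ y ∈ T.cell l x, ∑ y' ∈ T.cell l x', (f y - f y')
          = n * (∑ y ∈ T.cell l x, f y) - n * (∑ y' ∈ T.cell l x', f y') := by
        simp only [Finset.sum_sub_distrib, Finset.sum_const, nsmul_eq_mul,
          hcard1, hcard2]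
        rw [hn]
        push_cast
        rw [← Finset.mul_sum]
      unfold DyadicTree.avg
      rw [hcard1, hcard2, expand, ← hn]
      field_simp
    have hterm : ∀ y ∈ T.cell l x, ∀ y' ∈ T.cell l x',
        |f y - f y'| ≤ C * T.rho x x' ^ α := by
      intro y hy y' hy'
      have h1 : T.sameNode l x y := (aux_mem_cell_iff T).mp hy
      have h2 : T.sameNode l x' y' := (aux_mem_cell_iff T).mp hy'
      have := hf y y'
      rwa [aux_rho_eq T hl hsame h1 h2] at this
    have hbound : |∑ y ∈ T.cell l x, ∑ y' ∈ T.cell l x', (f y - f y')| ≤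
        n * n * (C * T.rho x x' ^ α) := by
      calc |∑ y ∈ T.cell l x, ∑ y' ∈ T.cell l x', (f y - f y')|
          ≤ ∑ y ∈ T.cell l x, |∑ y' ∈ T.cell l x', (f y - f y')| :=
            Finset.abs_sum_le_sum_abs _ _
        _ ≤ ∑ y ∈ T.cell l x, ∑ y' ∈ T.cell l x', |f y - f y'| :=
            Finset.sum_le_sum fun y _ => Finset.abs_sum_le_sum_abs _ _
        _ ≤ ∑ y ∈ T.cell l x, ∑ y' ∈ T.cell l x', (C * T.rho x x' ^ α) :=
            Finset.sum_le_sum fun y hy => Finset.sum_le_sum fun y' hy' =>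
              hterm y hy y' hy'
        _ = n * n * (C * T.rho x x' ^ α) := by
            simp only [Finset.sum_const, nsmul_eq_mul, hcard1, hcard2, ← hn]
            ring
    rw [key, abs_div, abs_of_pos (mul_pos hnpos hnpos)]
    rw [div_le_iff₀ (mul_pos hnpos hnpos)]
    linarith [hbound]
end

section
/- Let α > 0, let A ∈ C²(ℝ), and let f ∈ Λ_α(X×Y) with constant C. Then the composition A∘f belongs to Λ_α(X×Y), with a constant depending only on C, α, and the suprema of |A'| and |A''| on the interval [min f, max f]. -/
open scoped Classical
open Finset

lemma rho_nonneg' {X : Type} [Fintype X] {L : ℕ} (T : DyadicTree X L) (x x' : X) :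
    0 ≤ T.rho x x' := by
  unfold DyadicTree.rho; split <;> positivity

lemma lip_of_deriv_bound {A : ℝ → ℝ} (hA : Differentiable ℝ A) {B m M : ℝ}
    (hB : ∀ t ∈ Set.Icc m M, |deriv A t| ≤ B) {a b : ℝ}
    (ha : a ∈ Set.Icc m M) (hb : b ∈ Set.Icc m M) :
    |A a - A b| ≤ B * |a - b| := by
  have := (convex_Icc m M).norm_image_sub_le_of_norm_deriv_le
    (fun x _ => hA x) (fun x hx => by simpa [Real.norm_eq_abs] using hB x hx) hb ha
  simpa [Real.norm_eq_abs] using this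

lemma mixed_bound {A : ℝ → ℝ} (hA : ContDiff ℝ 2 A) {m M B1 B2 : ℝ}
    (h1 : ∀ t ∈ Set.Icc m M, |deriv A t| ≤ B1)
    (h2 : ∀ t ∈ Set.Icc m M, |deriv (deriv A) t| ≤ B2)
    {a b c d D Dx Dy : ℝ}
    (ha : a ∈ Set.Icc m M) (hb : b ∈ Set.Icc m M)
    (hc : c ∈ Set.Icc m M) (hd : d ∈ Set.Icc m M)
    (hD : |a - b - c + d| ≤ D) (hbd : |b - d| ≤ Dy) (hac : |a - c| ≤ Dy)
    (hcd : |c - d| ≤ Dx) :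
    |A a - A b - A c + A d| ≤ B1 * D + B2 * Dy * Dx := by
  have hAd : Differentiable ℝ A := hA.differentiable (by norm_num)
  have hA'd : Differentiable ℝ (deriv A) := by
    have h : ContDiff ℝ ((1:WithTop ℕ∞)+1) A := by
      rw [show ((1:WithTop ℕ∞)+1) = 2 from rfl]; exact hA
    exact ((contDiff_succ_iff_deriv.mp h).2.2).differentiable (by norm_num)
  set g : ℝ → ℝ := fun t => A (b + t * (a - b)) - A (d + t * (c - d)) with hg
  have hu : ∀ t ∈ Set.Icc (0:ℝ) 1, b + t * (a - b) ∈ Set.Icc m M := by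
    intro t ht
    have := (convex_Icc m M) hb ha (by linarith [ht.2] : (0:ℝ) ≤ 1 - t) ht.1 (by ring)
    simpa [smul_eq_mul] using (by rw [show b + t * (a - b) = (1-t) * b + t * a by ring]; exact this)
  have hv : ∀ t ∈ Set.Icc (0:ℝ) 1, d + t * (c - d) ∈ Set.Icc m M := by
    intro t ht
    have := (convex_Icc m M) hd hc (by linarith [ht.2] : (0:ℝ) ≤ 1 - t) ht.1 (by ring)
    simpa [smul_eq_mul] using (by rw [show d + t * (c - d) = (1-t) * d + t * c by ring]; exact this)
  have hgd : ∀ t : ℝ, HasDerivAt g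
      (deriv A (b + t * (a - b)) * (a - b) - deriv A (d + t * (c - d)) * (c - d)) t := by
    intro t
    have l1 : HasDerivAt (fun t : ℝ => b + t * (a - b)) (a - b) t := by
      simpa using ((hasDerivAt_id t).mul_const (a - b)).const_add b
    have l2 : HasDerivAt (fun t : ℝ => d + t * (c - d)) (c - d) t := by
      simpa using ((hasDerivAt_id t).mul_const (c - d)).const_add d
    have e1 := ((hAd _).hasDerivAt.comp t l1)
    have e2 := ((hAd _).hasDerivAt.comp t l2)
    exact e1.sub e2
  have hbound : ∀ t ∈ Set.Icc (0:ℝ) 1, ‖deriv g t‖ ≤ B1 * D + B2 * Dy * Dx := by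
    intro t ht
    obtain ⟨ht0, ht1⟩ := ht
    have ht' : t ∈ Set.Icc (0:ℝ) 1 := ⟨ht0, ht1⟩
    rw [(hgd t).deriv]
    set u := b + t * (a - b)
    set v := d + t * (c - d)
    have hB2 : 0 ≤ B2 := le_trans (abs_nonneg _) (h2 u (hu t ht'))
    have huv : |u - v| ≤ Dy := by
      have : u - v = (1 - t) * (b - d) + t * (a - c) := by simp only [u, v]; ring
      rw [this]
      calc |(1 - t) * (b - d) + t * (a - c)| ≤ (1-t) * |b - d| + t * |a - c| := by
            refine (abs_add_le _ _).trans ?_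
            rw [abs_mul, abs_mul, abs_of_nonneg (by linarith : (0:ℝ) ≤ 1 - t),
              abs_of_nonneg ht0]
        _ ≤ (1-t) * Dy + t * Dy := by
            have h1t : (0:ℝ) ≤ 1 - t := by linarith
            gcongr
        _ = Dy := by ring
    have hlip : |deriv A u - deriv A v| ≤ B2 * |u - v| :=
      lip_of_deriv_bound hA'd h2 (hu t ht') (hv t ht')
    have key : deriv A u * (a - b) - deriv A v * (c - d)
        = deriv A u * ((a - b) - (c - d)) + (deriv A u - deriv A v) * (c - d) := by ring
    rw [Real.norm_eq_abs, key]
    calc |deriv A u * ((a - b) - (c - d)) + (deriv A u - deriv A v) * (c - d)|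
        ≤ |deriv A u| * |(a - b) - (c - d)| + |deriv A u - deriv A v| * |c - d| := by
          refine (abs_add_le _ _).trans ?_; rw [abs_mul, abs_mul]
      _ ≤ B1 * D + (B2 * Dy) * Dx := by
          have hx : |(a-b)-(c-d)| = |a - b - c + d| := by ring_nf
          gcongr
          · exact le_trans (abs_nonneg _) (h1 u (hu t ht'))
          · exact h1 u (hu t ht')
          · rw [hx]; exact hD
          · exact mul_nonneg hB2 (le_trans (abs_nonneg _) hbd)
          · exact hlip.trans (by gcongr)
      _ = B1 * D + B2 * Dy * Dx := by ring
  have := (convex_Icc (0:ℝ) 1).norm_image_sub_le_of_norm_deriv_le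
    (fun t _ => (hgd t).differentiableAt) hbound
    (Set.left_mem_Icc.mpr zero_le_one) (Set.right_mem_Icc.mpr zero_le_one)
  have h01 : g 1 - g 0 = A a - A b - A c + A d := by simp [g]; ring
  rw [Real.norm_eq_abs, Real.norm_eq_abs, h01] at this
  simpa using this

/-- If `A ∈ C²(ℝ)` and `f ∈ Λ_α(X×Y)` with constant `C`, then
`A∘f ∈ Λ_α(X×Y)` with a constant depending only on `C`, `α`, and (bounds `B₁`, `B₂` for)
the suprema of `|A'|` and `|A''|` on the interval `[min f, max f]`. -/
theorem composition_preserves_Holder_tensor (α : ℝ) (hα : 0 < α) (C : ℝ) :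
    ∃ Φ : ℝ → ℝ → ℝ, ∀ (L S : ℕ) (X Y : Type) [Fintype X] [Fintype Y]
      (TX : DyadicTree X L) (TY : DyadicTree Y S) (A : ℝ → ℝ),
      ContDiff ℝ 2 A → ∀ f : X × Y → ℝ,
      HolderRect TX TY α C f →
      ∀ B1 B2 : ℝ,
        (∀ t ∈ Set.Icc (⨅ p : X × Y, f p) (⨆ p : X × Y, f p), |deriv A t| ≤ B1) →
        (∀ t ∈ Set.Icc (⨅ p : X × Y, f p) (⨆ p : X × Y, f p), |deriv (deriv A) t| ≤ B2) →
        HolderRect TX TY α (Φ B1 B2) (fun p => A (f p)) := by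
  refine ⟨fun B1 B2 => B1 * C + B2 * C ^ 2, ?_⟩
  intro L S X Y _ _ TX TY A hA f hf B1 B2 hB1 hB2
  by_cases hne : Nonempty (X × Y)
  · set m := ⨅ p : X × Y, f p with hm
    set M := ⨆ p : X × Y, f p with hM
    have hmem : ∀ p : X × Y, f p ∈ Set.Icc m M := fun p =>
      ⟨ciInf_le (Set.Finite.bddBelow (Set.finite_range f)) p,
        le_ciSup (Set.Finite.bddAbove (Set.finite_range f)) p⟩
    have hAd : Differentiable ℝ A := hA.differentiable (by norm_num)
    obtain ⟨p0⟩ := hne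
    have hB1n : 0 ≤ B1 := le_trans (abs_nonneg _) (hB1 _ (hmem p0))
    have hB2n : 0 ≤ B2 := le_trans (abs_nonneg _) (hB2 _ (hmem p0))
    obtain ⟨hmix, hx1, hy1⟩ := hf
    refine ⟨?_, ?_, ?_⟩
    · intro x x' y y'
      have hrx : (0:ℝ) ≤ TX.rho x x' ^ α := Real.rpow_nonneg (rho_nonneg' TX x x') α
      have hry : (0:ℝ) ≤ TY.rho y y' ^ α := Real.rpow_nonneg (rho_nonneg' TY y y') α
      have key := mixed_bound hA hB1 hB2 (hmem (x, y)) (hmem (x', y)) (hmem (x, y'))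
        (hmem (x', y')) (hmix x x' y y') (hy1 x' y y') (hy1 x y y') (hx1 x x' y')
      calc |A (f (x, y)) - A (f (x', y)) - A (f (x, y')) + A (f (x', y'))|
          ≤ B1 * (C * TX.rho x x' ^ α * TY.rho y y' ^ α)
            + B2 * (C * TY.rho y y' ^ α) * (C * TX.rho x x' ^ α) := key
        _ = (B1 * C + B2 * C ^ 2) * TX.rho x x' ^ α * TY.rho y y' ^ α := by ring
    · intro x x' y
      have hrx : (0:ℝ) ≤ TX.rho x x' ^ α := Real.rpow_nonneg (rho_nonneg' TX x x') α
      calc |A (f (x, y)) - A (f (x', y))|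
          ≤ B1 * |f (x, y) - f (x', y)| :=
            lip_of_deriv_bound hAd hB1 (hmem (x, y)) (hmem (x', y))
        _ ≤ B1 * (C * TX.rho x x' ^ α) :=
            mul_le_mul_of_nonneg_left (hx1 x x' y) hB1n
        _ ≤ (B1 * C + B2 * C ^ 2) * TX.rho x x' ^ α := by nlinarith [mul_nonneg (mul_nonneg hB2n (sq_nonneg C)) hrx]
    · intro x y y'
      have hry : (0:ℝ) ≤ TY.rho y y' ^ α := Real.rpow_nonneg (rho_nonneg' TY y y') α
      calc |A (f (x, y)) - A (f (x, y'))|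
          ≤ B1 * |f (x, y) - f (x, y')| :=
            lip_of_deriv_bound hAd hB1 (hmem (x, y)) (hmem (x, y'))
        _ ≤ B1 * (C * TY.rho y y' ^ α) :=
            mul_le_mul_of_nonneg_left (hy1 x y y') hB1n
        _ ≤ (B1 * C + B2 * C ^ 2) * TY.rho y y' ^ α := by nlinarith [mul_nonneg (mul_nonneg hB2n (sq_nonneg C)) hry]
  · exact ⟨fun x x' y y' => absurd ⟨(x, y)⟩ hne,
      fun x x' y => absurd ⟨(x, y)⟩ hne,
      fun x y y' => absurd ⟨(x, y)⟩ hne⟩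
end
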